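/- arXiv:1610.08108 — 14 statements merged into one kernel-verified Lean document; each statement's English description precedes it below -/
import Mathlib

section
/- Let χ ∈ [0,1], let s̃, l̃ ∈ ℝ² be orthonormal vectors and set T̃ = χ s̃⊗s̃ + l̃⊗l̃. Let f_A : [0,∞) → ℝ be continuously differentiable and not constant on (0,∞). Then the anisotropic attraction force field F_A(d) = f_A(|d|) T̃ d on ℝ² is conservative — i.e. there exists a differentiable function W : ℝ² → ℝ with ∇W(d) = F_A(d) for all d ∈ ℝ² — if and only if χ = 1. -/
/-!
Let `P(r) = ∫₀ʳ t f_A(|t|) dt`. If `∇W = F_A`, then along the ray through a unit vector `u` the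
derivative of `W` is `⟪T̃u, u⟫ r f_A(r)`, so `W(r u) = W 0 + ⟪T̃u, u⟫ P(r)` and
`W(r l̃) - W(r s̃) = (1 - χ) P(r)`. Along the quarter circle of radius `r` from `r s̃` to `r l̃`
the factor `f_A(‖d‖) = f_A(r)` is constant and `W` changes by `(1 - χ) f_A(r) r² / 2`.
For `χ ≠ 1` this gives `P(r) = f_A(r) r² / 2` on `(0, ∞)`, so `f_A = 2P(r)/r²` has derivative
`0` there and is constant. For `χ = 1` the force `f_A(‖d‖) d` is radial, hence a gradient.
-/

open InnerProductSpace Set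
open scoped RealInnerProductSpace

variable {E : Type*} [NormedAddCommGroup E] [InnerProductSpace ℝ E]

theorem HasGradientAt.comp_hasDerivAt [CompleteSpace E] {W : E → ℝ} {g : E} {γ : ℝ → E}
    {v : E} {t : ℝ} (hW : HasGradientAt W g (γ t)) (hγ : HasDerivAt γ v t) :
    HasDerivAt (W ∘ γ) ⟪g, v⟫ t := by
  rw [← toDual_apply_apply (𝕜 := ℝ)]
  exact hW.hasFDerivAt.comp_hasDerivAt t hγ

theorem sub_eq_sub_of_hasDerivAt_eq {f g f' : ℝ → ℝ} (hf : ∀ t, HasDerivAt f (f' t) t)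
    (hg : ∀ t, HasDerivAt g (f' t) t) (a b : ℝ) : f b - g b = f a - g a := by
  have hd : ∀ t, HasDerivAt (fun t => f t - g t) 0 t := fun t => by
    have := (hf t).sub (hg t)
    rwa [sub_self] at this
  exact is_const_of_deriv_eq_zero (fun t => (hd t).differentiableAt) (fun t => (hd t).deriv) b a

def attractionForce (χ : ℝ) (s l : E) (fA : ℝ → ℝ) (d : E) : E :=
  fA ‖d‖ • ((χ * ⟪s, d⟫) • s + ⟪l, d⟫ • l)

theorem inner_attractionForce (χ : ℝ) (s l : E) (fA : ℝ → ℝ) (d v : E) :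
    ⟪attractionForce χ s l fA d, v⟫ = fA ‖d‖ * (χ * ⟪s, d⟫ * ⟪s, v⟫ + ⟪l, d⟫ * ⟪l, v⟫) := by
  simp only [attractionForce, real_inner_smul_left, inner_add_left, mul_assoc]

noncomputable def radialPrimitive (f : ℝ → ℝ) (r : ℝ) : ℝ := ∫ t in (0 : ℝ)..r, t * f |t|

@[simp]
theorem radialPrimitive_zero (f : ℝ → ℝ) : radialPrimitive f 0 = 0 :=
  intervalIntegral.integral_same

theorem hasDerivAt_radialPrimitive {f : ℝ → ℝ} (hf : ContinuousOn f (Ici 0)) (r : ℝ) :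
    HasDerivAt (radialPrimitive f) (r * f |r|) r :=
  have hc : Continuous fun t : ℝ => t * f |t| :=
    continuous_id.mul (hf.comp_continuous continuous_abs abs_nonneg)
  (hc.integral_hasStrictDerivAt 0 r).hasDerivAt

theorem exists_eq_const_on_Ioi_of_radialPrimitive_eq {f : ℝ → ℝ} (hf : ContinuousOn f (Ici 0))
    (h : ∀ r > 0, radialPrimitive f r = f r * r ^ 2 / 2) : ∃ c, ∀ ρ ∈ Ioi (0 : ℝ), f ρ = c := by
  set g : ℝ → ℝ := fun r => 2 * radialPrimitive f r / r ^ 2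
  have hfg : EqOn f g (Ioi 0) := fun r (hr : 0 < r) => by
    simp only [g, h r hr]
    field_simp
  have hg : ∀ r ∈ Ioi (0 : ℝ), HasDerivAt g 0 r := fun r (hr : 0 < r) => by
    refine (((hasDerivAt_radialPrimitive hf r).const_mul 2).div (hasDerivAt_pow 2 r)
      (pow_ne_zero 2 hr.ne')).congr_deriv ?_
    rw [abs_of_pos hr, h r hr]
    field_simp
    ring
  obtain ⟨c, hc⟩ := isOpen_Ioi.exists_is_const_of_deriv_eq_zero isPreconnected_Ioi
    (fun r hr => (hg r hr).differentiableAt.differentiableWithinAt) (fun r hr => (hg r hr).deriv)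
  exact ⟨c, fun ρ hρ => (hfg hρ).trans (hc ρ hρ)⟩

section Orthonormal

variable {s l : E}

theorem inner_left_smul_add_smul (hs : ‖s‖ = 1) (hsl : ⟪s, l⟫ = 0) (a b : ℝ) :
    ⟪s, a • s + b • l⟫ = a := by
  simp [inner_add_right, real_inner_smul_right, hs, hsl]

theorem inner_right_smul_add_smul (hl : ‖l‖ = 1) (hsl : ⟪s, l⟫ = 0) (a b : ℝ) :
    ⟪l, a • s + b • l⟫ = b := by
  simp [inner_add_right, real_inner_smul_right, hl, real_inner_comm s l ▸ hsl]

theorem norm_smul_add_smul_sq (hs : ‖s‖ = 1) (hl : ‖l‖ = 1) (hsl : ⟪s, l⟫ = 0) (a b : ℝ) :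
    ‖a • s + b • l‖ ^ 2 = a ^ 2 + b ^ 2 := by
  rw [← real_inner_self_eq_norm_sq, inner_add_left, real_inner_smul_left, real_inner_smul_left,
    inner_left_smul_add_smul hs hsl, inner_right_smul_add_smul hl hsl]
  ring

theorem smul_add_smul_eq_self_of_finrank_eq_two (h2 : Module.finrank ℝ E = 2)
    (hs : ‖s‖ = 1) (hl : ‖l‖ = 1) (hsl : ⟪s, l⟫ = 0) (d : E) : ⟪s, d⟫ • s + ⟪l, d⟫ • l = d := by
  have hon : Orthonormal ℝ ![s, l] := by
    rw [orthonormal_iff_ite]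
    intro i j
    fin_cases i <;> fin_cases j <;> simp [hs, hl, hsl, real_inner_comm s l]
  have hspan := (hon.linearIndependent.span_eq_top_of_card_eq_finrank (by simp [h2])).ge
  simpa [OrthonormalBasis.coe_mk] using (OrthonormalBasis.mk hon hspan).sum_repr' d

end Orthonormal

section Potential

variable [CompleteSpace E] {χ : ℝ} {s l : E} {fA : ℝ → ℝ} {W : E → ℝ}

theorem potential_smul_eq (hW : ∀ d, HasGradientAt W (attractionForce χ s l fA d) d)
    (hf : ContinuousOn fA (Ici 0)) {u : E} (hu : ‖u‖ = 1) (r : ℝ) :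
    W (r • u) = W 0 + (χ * ⟪s, u⟫ ^ 2 + ⟪l, u⟫ ^ 2) * radialPrimitive fA r := by
  have hWu : ∀ t : ℝ, HasDerivAt (W ∘ (· • u))
      ((χ * ⟪s, u⟫ ^ 2 + ⟪l, u⟫ ^ 2) * (t * fA |t|)) t := fun t => by
    convert (hW (t • u)).comp_hasDerivAt ((hasDerivAt_id' t).smul_const u) using 1
    rw [one_smul, inner_attractionForce, real_inner_smul_right, real_inner_smul_right, norm_smul,
      hu, Real.norm_eq_abs, mul_one]
    ring
  have := sub_eq_sub_of_hasDerivAt_eq hWu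
    (fun t => (hasDerivAt_radialPrimitive hf t).const_mul _) 0 r
  simp only [Function.comp_apply, zero_smul, radialPrimitive_zero, mul_zero, sub_zero] at this
  linarith

theorem potential_smul_sub_potential_smul
    (hW : ∀ d, HasGradientAt W (attractionForce χ s l fA d) d)
    (hs : ‖s‖ = 1) (hl : ‖l‖ = 1) (hsl : ⟪s, l⟫ = 0) {r : ℝ} (hr : 0 ≤ r) :
    W (r • l) - W (r • s) = (1 - χ) * (fA r * r ^ 2 / 2) := by
  set c := (1 - χ) * (fA r * r ^ 2 / 2)
  set γ : ℝ → E := fun t => (r * Real.cos t) • s + (r * Real.sin t) • l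
  have hγ : ∀ t, ‖γ t‖ = r := fun t => by
    rw [← sq_eq_sq₀ (norm_nonneg _) hr, norm_smul_add_smul_sq hs hl hsl]
    linear_combination r ^ 2 * Real.cos_sq_add_sin_sq t
  have hWγ : ∀ t, HasDerivAt (W ∘ γ) (c * (2 * Real.sin t * Real.cos t)) t := fun t => by
    have hγ' : HasDerivAt γ ((r * -Real.sin t) • s + (r * Real.cos t) • l) t :=
      (((Real.hasDerivAt_cos t).const_mul r).smul_const s).add
        (((Real.hasDerivAt_sin t).const_mul r).smul_const l)
    convert (hW (γ t)).comp_hasDerivAt hγ' using 1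
    rw [inner_attractionForce, hγ]
    simp only [γ, inner_left_smul_add_smul hs hsl, inner_right_smul_add_smul hl hsl]
    ring
  have hsin : ∀ t,
      HasDerivAt (fun t => c * Real.sin t ^ 2) (c * (2 * Real.sin t * Real.cos t)) t :=
    fun t => by simpa using ((Real.hasDerivAt_sin t).pow 2).const_mul c
  have := sub_eq_sub_of_hasDerivAt_eq hWγ hsin 0 (Real.pi / 2)
  simp only [Function.comp_apply, γ, Real.cos_pi_div_two, Real.sin_pi_div_two, Real.cos_zero,
    Real.sin_zero, mul_zero, mul_one, zero_smul, zero_add, add_zero, one_pow, ne_eq,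
    OfNat.ofNat_ne_zero, not_false_eq_true, zero_pow, sub_zero] at this
  linarith

theorem eq_one_of_hasGradientAt_attractionForce (hs : ‖s‖ = 1) (hl : ‖l‖ = 1) (hsl : ⟪s, l⟫ = 0)
    (hf : ContinuousOn fA (Ici 0)) (hf_nonconst : ¬ ∃ c, ∀ ρ ∈ Ioi (0 : ℝ), fA ρ = c)
    (hW : ∀ d, HasGradientAt W (attractionForce χ s l fA d) d) : χ = 1 := by
  by_contra hχ
  refine hf_nonconst (exists_eq_const_on_Ioi_of_radialPrimitive_eq hf fun r hr => ?_)
  have hsl' : ⟪l, s⟫ = 0 := real_inner_comm s l ▸ hsl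
  have hss : ⟪s, s⟫ = 1 := by rw [real_inner_self_eq_norm_sq, hs, one_pow]
  have hll : ⟪l, l⟫ = 1 := by rw [real_inner_self_eq_norm_sq, hl, one_pow]
  have hrays : W (r • l) - W (r • s) = (1 - χ) * radialPrimitive fA r := by
    rw [potential_smul_eq hW hf hl, potential_smul_eq hW hf hs, hsl', hll, hss, hsl]
    ring
  have hcircle := potential_smul_sub_potential_smul hW hs hl hsl hr.le
  have h1χ : 1 - χ ≠ 0 := sub_ne_zero.mpr (Ne.symm hχ)
  exact mul_left_cancel₀ h1χ (hrays.symm.trans hcircle)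

end Potential

/-- The potential is taken as a function of `‖x‖ ^ 2` rather than `‖x‖`, so that it is
differentiable at the origin as well. -/
theorem exists_hasGradientAt_eq_smul_self [CompleteSpace E] {f : ℝ → ℝ}
    (hf : ContinuousOn f (Ici 0)) : ∃ W : E → ℝ, ∀ d, HasGradientAt W (f ‖d‖ • d) d := by
  have hc : Continuous fun u => f √u / 2 :=
    (hf.comp_continuous Real.continuous_sqrt Real.sqrt_nonneg).div_const 2
  refine ⟨fun x => ∫ u in (0 : ℝ)..‖x‖ ^ 2, f √u / 2, fun d => ?_⟩
  refine ((hc.integral_hasStrictDerivAt 0 _).hasDerivAt.comp_hasFDerivAt d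
    (hasStrictFDerivAt_norm_sq d).hasFDerivAt).congr_fderiv ?_
  ext v
  simp only [Real.sqrt_sq (norm_nonneg d), toDual_apply_apply, real_inner_smul_left,
    smul_apply, coe_innerSL_apply, nsmul_eq_mul, Nat.cast_ofNat, smul_eq_mul]
  ring

theorem attraction_force_conservative_iff_chi_eq_one_general
    (χ : ℝ)
    (s l : EuclideanSpace ℝ (Fin 2))
    (hs : ‖s‖ = 1) (hl : ‖l‖ = 1) (hsl : (inner ℝ s l : ℝ) = 0)
    (fA : ℝ → ℝ) (hfA : ContDiffOn ℝ 1 fA (Set.Ici 0))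
    (hfA_nonconst : ¬ ∃ cst : ℝ, ∀ ρ ∈ Set.Ioi (0 : ℝ), fA ρ = cst) :
    (∃ W : EuclideanSpace ℝ (Fin 2) → ℝ,
      ∀ d : EuclideanSpace ℝ (Fin 2),
        HasGradientAt W
          (fA ‖d‖ • ((χ * (inner ℝ s d : ℝ)) • s + (inner ℝ l d : ℝ) • l)) d)
      ↔ χ = 1 := by
  constructor
  · rintro ⟨W, hW⟩
    exact eq_one_of_hasGradientAt_attractionForce hs hl hsl hfA.continuousOn hfA_nonconst hW
  · rintro rfl
    obtain ⟨W, hW⟩ :=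
      exists_hasGradientAt_eq_smul_self (E := EuclideanSpace ℝ (Fin 2)) hfA.continuousOn
    refine ⟨W, fun d => ?_⟩
    rw [one_mul, smul_add_smul_eq_self_of_finrank_eq_two finrank_euclideanSpace_fin hs hl hsl]
    exact hW d

/-- For the anisotropic attraction force
`F_A(d) = f_A(‖d‖) T̃ d` with `T̃ = χ s̃⊗s̃ + l̃⊗l̃` built from orthonormal
vectors `s̃, l̃ ∈ ℝ²`, where `f_A` is continuously differentiable on `[0,∞)` and
not constant on `(0,∞)`, the force is conservative (i.e. there is a
differentiable potential `W` with `∇W = F_A` everywhere) if and only if `χ = 1`. -/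
theorem attraction_force_conservative_iff_chi_eq_one
    (χ : ℝ) (hχ : χ ∈ Set.Icc (0 : ℝ) 1)
    (s l : EuclideanSpace ℝ (Fin 2))
    (hs : ‖s‖ = 1) (hl : ‖l‖ = 1) (hsl : (inner ℝ s l : ℝ) = 0)
    (fA : ℝ → ℝ) (hfA : ContDiffOn ℝ 1 fA (Set.Ici 0))
    (hfA_nonconst : ¬ ∃ cst : ℝ, ∀ ρ ∈ Set.Ioi (0 : ℝ), fA ρ = cst) :
    (∃ W : EuclideanSpace ℝ (Fin 2) → ℝ,
      ∀ d : EuclideanSpace ℝ (Fin 2),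
        HasGradientAt W
          (fA ‖d‖ • ((χ * (inner ℝ s d : ℝ)) • s + (inner ℝ l d : ℝ) • l)) d)
      ↔ χ = 1 :=
  attraction_force_conservative_iff_chi_eq_one_general χ s l hs hl hsl fA hfA hfA_nonconst
end

section
/- Let f : [0,∞) → ℝ be continuous, let R > 0, let x_c ∈ ℝ², and let μ_R denote the uniform (normalized arclength) probability measure on the circle {x_c + R(cos φ, sin φ) : φ ∈ [0,2π)} ⊂ ℝ². Define the isotropic force F(d) = f(|d|) d for d ∈ ℝ². Then μ_R is an equilibrium state, i.e. ∫ F(x − y) dμ_R(y) = 0 for every x in the support of μ_R, if and only if ∫₀^π f(R √((1 − cos φ)² + sin² φ)) (1 − cos φ) dφ = 0. -/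
/-!
Parametrize the circle by `p φ = xc + R u(φ)` with `u(φ) = (cos φ, sin φ)`. Since
`|p θ - p φ| = R √((1 - cos (θ - φ))² + sin² (θ - φ))` depends only on `θ - φ`, the periodic
substitution `φ = θ - ψ` turns the force at `p θ` into
`(R / 2π) ∫₀^{2π} g(ψ) ((1 - cos ψ) u(θ) + sin ψ u(θ)^⊥) dψ`, where
`g(ψ) = f(R √((1 - cos ψ)² + sin² ψ))`. As `g(2π - ψ) = g(ψ)`, the tangential part vanishes and
the radial part is twice the integral over `[0, π]`: the force at `p θ` is `(R / π) I u(θ)`,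
with `I` the integral of the statement.
-/

open MeasureTheory Real

/-- The uniform (normalized arclength) probability measure on the circle of
radius `R` centered at `xc ⊂ ℝ²`, realized as the pushforward of normalized
Lebesgue measure on `[0, 2π)` under the standard parametrization. -/
noncomputable def uniformCircleMeasure (xc : ℝ × ℝ) (R : ℝ) : Measure (ℝ × ℝ) :=
  Measure.map (fun φ : ℝ => (xc.1 + R * Real.cos φ, xc.2 + R * Real.sin φ))
    (ENNReal.ofReal (2 * Real.pi)⁻¹ • volume.restrict (Set.Ico 0 (2 * Real.pi)))

section SymmetricIntegrals

variable {E : Type*} [NormedAddCommGroup E] [NormedSpace ℝ E] {h : ℝ → E} {a : ℝ}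

theorem intervalIntegral_eq_zero_of_antisymmetric (hh : ∀ x, h (a - x) = -h x) :
    ∫ x in 0..a, h x = 0 := by
  have h_eq_neg : ∫ x in 0..a, h x = -∫ x in 0..a, h x := calc
    ∫ x in 0..a, h x = ∫ x in 0..a, h (a - x) := by simp [intervalIntegral.integral_comp_sub_left]
    _ = -∫ x in 0..a, h x := by simp only [hh, intervalIntegral.integral_neg]
  have h_two_smul : (2 : ℝ) • ∫ x in 0..a, h x = 0 := by
    rw [two_smul]; nth_rw 1 [h_eq_neg]; exact neg_add_cancel _
  exact (smul_eq_zero.mp h_two_smul).resolve_left two_ne_zero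

theorem intervalIntegral_two_mul_eq_two_smul_of_symmetric (hint : IntervalIntegrable h volume 0 a)
    (hh : ∀ x, h (2 * a - x) = h x) :
    ∫ x in 0..2 * a, h x = (2 : ℝ) • ∫ x in 0..a, h x := by
  have h_upper : ∫ x in a..2 * a, h x = ∫ x in 0..a, h x := calc
    ∫ x in a..2 * a, h x = ∫ x in 0..a, h (2 * a - x) := by
      rw [intervalIntegral.integral_comp_sub_left]; ring_nf
    _ = ∫ x in 0..a, h x := by simp only [hh]
  have hint_upper : IntervalIntegrable h volume a (2 * a) := by
    have := hint.comp_sub_left (2 * a)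
    simp only [hh, sub_zero, show 2 * a - a = a by ring] at this
    exact this.symm
  rw [← intervalIntegral.integral_add_adjacent_intervals hint hint_upper, h_upper, two_smul]

theorem Function.Periodic.intervalIntegral_comp_sub_left {T : ℝ} (hh : Function.Periodic h T)
    (t : ℝ) : ∫ x in 0..T, h (t - x) = ∫ x in 0..T, h x := by
  rw [intervalIntegral.integral_comp_sub_left, ← zero_add T,
    ← hh.intervalIntegral_add_eq (t - T) 0]
  ring_nf

end SymmetricIntegrals

theorem integral_uniformCircleMeasure {E : Type*} [NormedAddCommGroup E] [NormedSpace ℝ E]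
    (xc : ℝ × ℝ) (R : ℝ) {h : ℝ × ℝ → E} (hh : Continuous h) :
    ∫ y, h y ∂uniformCircleMeasure xc R
      = (2 * π)⁻¹ • ∫ φ in 0..2 * π, h (xc.1 + R * cos φ, xc.2 + R * sin φ) := by
  have hparam : Continuous fun φ : ℝ => (xc.1 + R * cos φ, xc.2 + R * sin φ) := by fun_prop
  rw [uniformCircleMeasure, integral_map hparam.aemeasurable hh.aestronglyMeasurable,
    integral_smul_measure, ENNReal.toReal_ofReal (by positivity),
    intervalIntegral.integral_of_le (by positivity), integral_Ico_eq_integral_Ioo,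
    integral_Ioc_eq_integral_Ioo]

noncomputable def isotropicForce (f : ℝ → ℝ) (d : ℝ × ℝ) : ℝ × ℝ :=
  f (√(d.1 ^ 2 + d.2 ^ 2)) • d

/-- `f` at the distance between two points at angular separation `ψ` on a circle of radius `R`. -/
noncomputable def ringProfile (f : ℝ → ℝ) (R ψ : ℝ) : ℝ :=
  f (R * √((1 - cos ψ) ^ 2 + sin ψ ^ 2))

theorem cos_sin_sub_cos_sin_sub (θ ψ : ℝ) :
    ((cos θ, sin θ) - (cos (θ - ψ), sin (θ - ψ)) : ℝ × ℝ)
      = (1 - cos ψ) • (cos θ, sin θ) + sin ψ • (-sin θ, cos θ) := by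
  ext <;> simp [cos_sub, sin_sub] <;> ring

section RingForce

variable {f : ℝ → ℝ} {R : ℝ}

theorem continuous_isotropicForce (hf : ContinuousOn f (Set.Ici 0)) :
    Continuous (isotropicForce f) :=
  (hf.comp_continuous (by fun_prop) fun _ => Real.sqrt_nonneg _).smul continuous_id

theorem continuous_ringProfile (hf : ContinuousOn f (Set.Ici 0)) (hR : 0 ≤ R) :
    Continuous (ringProfile f R) :=
  hf.comp_continuous (by fun_prop) fun _ => mul_nonneg hR (Real.sqrt_nonneg _)

theorem ringProfile_periodic : Function.Periodic (ringProfile f R) (2 * π) := by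
  intro ψ; simp [ringProfile]

theorem ringProfile_two_pi_sub (ψ : ℝ) : ringProfile f R (2 * π - ψ) = ringProfile f R ψ := by
  simp [ringProfile]

theorem integral_ringProfile_mul_one_sub_cos (hf : ContinuousOn f (Set.Ici 0)) (hR : 0 ≤ R) :
    ∫ ψ in 0..2 * π, ringProfile f R ψ * (1 - cos ψ)
      = 2 * ∫ ψ in 0..π, ringProfile f R ψ * (1 - cos ψ) :=
  intervalIntegral_two_mul_eq_two_smul_of_symmetric
    (((continuous_ringProfile hf hR).mul (by fun_prop)).intervalIntegrable _ _)
    fun ψ => by rw [ringProfile_two_pi_sub, cos_two_pi_sub]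

theorem integral_ringProfile_mul_sin : ∫ ψ in 0..2 * π, ringProfile f R ψ * sin ψ = 0 :=
  intervalIntegral_eq_zero_of_antisymmetric fun ψ => by
    rw [ringProfile_two_pi_sub, sin_two_pi_sub, mul_neg]

theorem isotropicForce_circle_sub_circle (hR : 0 ≤ R) (xc : ℝ × ℝ) (θ φ : ℝ) :
    isotropicForce f
        ((xc.1 + R * cos θ, xc.2 + R * sin θ) - (xc.1 + R * cos φ, xc.2 + R * sin φ))
      = R • ringProfile f R (θ - φ) • ((cos θ, sin θ) - (cos φ, sin φ)) := by
  have hdist : (R * cos θ - R * cos φ) ^ 2 + (R * sin θ - R * sin φ) ^ 2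
      = R ^ 2 * ((1 - cos (θ - φ)) ^ 2 + sin (θ - φ) ^ 2) := by
    rw [cos_sub, sin_sub]
    linear_combination (-R ^ 2 * (sin φ ^ 2 + cos φ ^ 2 - 1)) * sin_sq_add_cos_sq θ
  simp only [isotropicForce, ringProfile, Prod.mk_sub_mk, add_sub_add_left_eq_sub, hdist,
    Real.sqrt_mul (sq_nonneg R), Real.sqrt_sq hR]
  ext <;> simp <;> ring

theorem integral_isotropicForce_uniformCircleMeasure (hf : ContinuousOn f (Set.Ici 0))
    (hR : 0 ≤ R) (xc : ℝ × ℝ) (θ : ℝ) :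
    ∫ y, isotropicForce f ((xc.1 + R * cos θ, xc.2 + R * sin θ) - y) ∂uniformCircleMeasure xc R
      = (π⁻¹ * R * ∫ ψ in 0..π, ringProfile f R ψ * (1 - cos ψ)) • (cos θ, sin θ) := by
  have hg : Continuous (ringProfile f R) := continuous_ringProfile hf hR
  have h_periodic : Function.Periodic (fun ψ =>
      ringProfile f R ψ • ((cos θ, sin θ) - (cos (θ - ψ), sin (θ - ψ)) : ℝ × ℝ)) (2 * π) := by
    intro ψ
    simp only [ringProfile_periodic ψ, sub_add_eq_sub_sub, cos_sub_two_pi, sin_sub_two_pi]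
  rw [integral_uniformCircleMeasure xc R ?hcont]
  case hcont => exact (continuous_isotropicForce hf).comp (continuous_const.sub continuous_id)
  calc (2 * π)⁻¹ • ∫ φ in 0..2 * π, isotropicForce f
          ((xc.1 + R * cos θ, xc.2 + R * sin θ) - (xc.1 + R * cos φ, xc.2 + R * sin φ))
      = ((2 * π)⁻¹ * R) • ∫ φ in 0..2 * π, ringProfile f R (θ - φ) •
          ((cos θ, sin θ) - (cos (θ - (θ - φ)), sin (θ - (θ - φ)))) := by
        simp only [isotropicForce_circle_sub_circle hR, sub_sub_cancel,
          intervalIntegral.integral_smul, mul_smul]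
    _ = ((2 * π)⁻¹ * R) •
          ∫ ψ in 0..2 * π, ringProfile f R ψ • ((cos θ, sin θ) - (cos (θ - ψ), sin (θ - ψ))) := by
        rw [h_periodic.intervalIntegral_comp_sub_left θ]
    _ = ((2 * π)⁻¹ * R) • ((∫ ψ in 0..2 * π, ringProfile f R ψ * (1 - cos ψ)) • (cos θ, sin θ)
          + (∫ ψ in 0..2 * π, ringProfile f R ψ * sin ψ) • (-sin θ, cos θ)) := by
        congr 1
        simp only [cos_sin_sub_cos_sin_sub, smul_add, smul_smul]
        rw [intervalIntegral.integral_add, intervalIntegral.integral_smul_const,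
          intervalIntegral.integral_smul_const]
        all_goals apply Continuous.intervalIntegrable; fun_prop
    _ = _ := by
        rw [integral_ringProfile_mul_one_sub_cos hf hR, integral_ringProfile_mul_sin, zero_smul,
          add_zero, smul_smul]
        congr 1
        field_simp

end RingForce

/-- For the isotropic force `F(d) = f(|d|) d`, the uniform
probability measure on the circle of radius `R > 0` centered at `xc` is an
equilibrium state (the force convolution vanishes at every point of the
circle, the support of the measure) if and only if
`∫₀^π f(R √((1 − cos φ)² + sin² φ)) (1 − cos φ) dφ = 0`. -/
theorem ring_equilibrium_iff
    (f : ℝ → ℝ) (hf : ContinuousOn f (Set.Ici 0))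
    (R : ℝ) (hR : 0 < R) (xc : ℝ × ℝ) :
    (∀ x ∈ Set.range (fun φ : ℝ =>
        ((xc.1 + R * Real.cos φ, xc.2 + R * Real.sin φ) : ℝ × ℝ)),
      ∫ y, (f (Real.sqrt ((x - y).1 ^ 2 + (x - y).2 ^ 2)) • (x - y))
          ∂(uniformCircleMeasure xc R) = 0)
    ↔ ∫ φ in (0:ℝ)..Real.pi,
        f (R * Real.sqrt ((1 - Real.cos φ) ^ 2 + Real.sin φ ^ 2))
          * (1 - Real.cos φ) = 0 := by
  have hK := integral_isotropicForce_uniformCircleMeasure hf hR.le xc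
  simp only [isotropicForce, ringProfile] at hK
  constructor
  · intro h
    have h0 := h (xc.1 + R * cos 0, xc.2 + R * sin 0) ⟨0, rfl⟩
    rw [hK] at h0
    simpa [pi_ne_zero, hR.ne'] using h0
  · rintro hI _ ⟨θ, rfl⟩
    rw [hK, hI, mul_zero, zero_smul]
end

section
/- Let f : [0,∞) → ℝ be continuous, let 0 < d_a < d_e, assume f(ρ) > 0 for all ρ ∈ [0,d_a) and f is strictly decreasing on [0,d_e]. Define G(R) = ∫₀^π f(R √((1 − cos φ)² + sin² φ)) (1 − cos φ) dφ. Then G is strictly decreasing on [0, d_e/2], and G(R) > 0 for all R ∈ [0, d_a/2]. -/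
open Real

/-- The function `G(R) = ∫₀^π f(R √((1 − cos φ)² + sin² φ)) (1 − cos φ) dφ`
appearing in the ring-equilibrium condition. -/
noncomputable def ringG (f : ℝ → ℝ) (R : ℝ) : ℝ :=
  ∫ φ in (0:ℝ)..Real.pi,
    f (R * Real.sqrt ((1 - Real.cos φ) ^ 2 + Real.sin φ ^ 2)) * (1 - Real.cos φ)

lemma ringS_eq (φ : ℝ) : (1 - Real.cos φ) ^ 2 + Real.sin φ ^ 2 = 2 - 2 * Real.cos φ := by
  linear_combination Real.sin_sq_add_cos_sq φ

lemma ringS_le_two (φ : ℝ) : Real.sqrt ((1 - Real.cos φ) ^ 2 + Real.sin φ ^ 2) ≤ 2 := by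
  rw [ringS_eq]
  have h : Real.sqrt (2 - 2 * Real.cos φ) ≤ Real.sqrt (2 ^ 2) :=
    Real.sqrt_le_sqrt (by nlinarith [Real.neg_one_le_cos φ])
  rwa [Real.sqrt_sq (by norm_num : (0:ℝ) ≤ 2)] at h

lemma ringS_lt_two {φ : ℝ} (h0 : 0 ≤ φ) (hπ : φ < Real.pi) :
    Real.sqrt ((1 - Real.cos φ) ^ 2 + Real.sin φ ^ 2) < 2 := by
  have hc : Real.cos Real.pi < Real.cos φ :=
    Real.strictAntiOn_cos ⟨h0, hπ.le⟩ ⟨Real.pi_pos.le, le_refl _⟩ hπ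
  rw [Real.cos_pi] at hc
  rw [ringS_eq]
  have h : Real.sqrt (2 - 2 * Real.cos φ) < Real.sqrt (2 ^ 2) :=
    Real.sqrt_lt_sqrt (by nlinarith [Real.cos_le_one φ]) (by nlinarith)
  rwa [Real.sqrt_sq (by norm_num : (0:ℝ) ≤ 2)] at h

lemma ringS_pos {φ : ℝ} (h0 : 0 < φ) (hπ : φ ≤ Real.pi) :
    0 < Real.sqrt ((1 - Real.cos φ) ^ 2 + Real.sin φ ^ 2) := by
  have hc : Real.cos φ < Real.cos 0 :=
    Real.strictAntiOn_cos ⟨le_refl _, Real.pi_pos.le⟩ ⟨h0.le, hπ⟩ h0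
  rw [Real.cos_zero] at hc
  rw [ringS_eq]
  exact Real.sqrt_pos.2 (by nlinarith)

lemma ringG_cont {f : ℝ → ℝ} (hf : ContinuousOn f (Set.Ici 0)) {R : ℝ} (hR : 0 ≤ R) :
    ContinuousOn
      (fun φ => f (R * Real.sqrt ((1 - Real.cos φ) ^ 2 + Real.sin φ ^ 2)) * (1 - Real.cos φ))
      (Set.Icc 0 Real.pi) := by
  have hinner : Continuous fun φ : ℝ =>
      R * Real.sqrt ((1 - Real.cos φ) ^ 2 + Real.sin φ ^ 2) := by
    exact continuous_const.mul (Real.continuous_sqrt.comp (by continuity))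
  exact ((hf.comp hinner.continuousOn
    (fun φ _ => mul_nonneg hR (Real.sqrt_nonneg _))).mul
    (continuous_const.sub Real.continuous_cos).continuousOn)

/-- If `f : [0,∞) → ℝ` is continuous, positive on `[0, d_a)` and
strictly decreasing on `[0, d_e]` with `0 < d_a < d_e`, then
`G(R) = ∫₀^π f(R √((1 − cos φ)² + sin² φ)) (1 − cos φ) dφ` is strictly
decreasing on `[0, d_e/2]` and positive on `[0, d_a/2]`. -/
theorem ringG_strictAnti_and_pos
    (f : ℝ → ℝ) (hf : ContinuousOn f (Set.Ici 0))
    (da de : ℝ) (hda : 0 < da) (hdade : da < de)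
    (hpos : ∀ ρ ∈ Set.Ico (0:ℝ) da, 0 < f ρ)
    (hdec : StrictAntiOn f (Set.Icc 0 de)) :
    StrictAntiOn (ringG f) (Set.Icc 0 (de / 2))
      ∧ ∀ R ∈ Set.Icc (0:ℝ) (da / 2), 0 < ringG f R := by
  have hde : 0 < de := hda.trans hdade
  set s : ℝ → ℝ := fun φ => Real.sqrt ((1 - Real.cos φ) ^ 2 + Real.sin φ ^ 2) with hs
  constructor
  · intro R1 hR1 R2 hR2 h12
    have hR1' : (0:ℝ) ≤ R1 := hR1.1
    have hR2' : (0:ℝ) ≤ R2 := hR2.1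
    have hmem : ∀ R : ℝ, 0 ≤ R → R ≤ de / 2 → ∀ φ : ℝ, R * s φ ∈ Set.Icc (0:ℝ) de := by
      intro R hR0 hRde φ
      refine ⟨mul_nonneg hR0 (Real.sqrt_nonneg _), ?_⟩
      have h1 : s φ ≤ 2 := ringS_le_two φ
      have h2 : 0 ≤ s φ := Real.sqrt_nonneg _
      nlinarith
    apply intervalIntegral.integral_lt_integral_of_continuousOn_of_le_of_exists_lt Real.pi_pos
      (ringG_cont hf hR2') (ringG_cont hf hR1')
    · intro φ hφ
      have hc : Real.cos φ ≤ 1 := Real.cos_le_one φ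
      refine mul_le_mul_of_nonneg_right ?_ (by linarith)
      rcases eq_or_lt_of_le (mul_le_mul_of_nonneg_right h12.le (Real.sqrt_nonneg _) :
          R1 * s φ ≤ R2 * s φ) with heq | hlt
      · rw [heq]
      · exact (hdec (hmem R1 hR1' hR1.2 φ) (hmem R2 hR2' hR2.2 φ) hlt).le
    · refine ⟨Real.pi / 2, ⟨by positivity, by linarith [Real.pi_pos]⟩, ?_⟩
      have hsp : 0 < s (Real.pi / 2) := ringS_pos (by positivity) (by linarith [Real.pi_pos])
      have hflt : f (R2 * s (Real.pi / 2)) < f (R1 * s (Real.pi / 2)) :=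
        hdec (hmem R1 hR1' hR1.2 _) (hmem R2 hR2' hR2.2 _)
          (mul_lt_mul_of_pos_right h12 hsp)
      have hcos : Real.cos (Real.pi / 2) = 0 := Real.cos_pi_div_two
      have : (0:ℝ) < 1 - Real.cos (Real.pi / 2) := by rw [hcos]; norm_num
      exact mul_lt_mul_of_pos_right hflt this
  · intro R hR
    apply intervalIntegral.intervalIntegral_pos_of_pos_on
      ((ringG_cont hf hR.1).intervalIntegrable_of_Icc Real.pi_pos.le)
    · intro φ hφ
      have hslt : s φ < 2 := ringS_lt_two hφ.1.le hφ.2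
      have hsnn : 0 ≤ s φ := Real.sqrt_nonneg _
      have hRs : R * s φ < da := by nlinarith [hR.1, hR.2]
      have hfp : 0 < f (R * s φ) :=
        hpos _ ⟨mul_nonneg hR.1 hsnn, hRs⟩
      have hc : Real.cos φ < Real.cos 0 :=
        Real.strictAntiOn_cos ⟨le_refl _, Real.pi_pos.le⟩ ⟨hφ.1.le, hφ.2.le⟩ hφ.1
      rw [Real.cos_zero] at hc
      exact mul_pos hfp (by linarith)
    · exact Real.pi_pos
end

section
/- Let f = f_A + f_R with f_A, f_R : [0,∞) → ℝ continuous, f_R ≥ 0, f_A ≤ 0; assume there exist 0 < d_a < d_e such that f(ρ) > 0 for 0 ≤ ρ < d_a, f(ρ) ≤ 0 for ρ > d_a, and f is strictly decreasing on [0,d_e]. Define G(R) = ∫₀^π f(R √((1 − cos φ)² + sin² φ)) (1 − cos φ) dφ. Then there is at most one radius R ∈ (0, d_e/2] with G(R) = 0; i.e. at most one nontrivial ring equilibrium of radius R ∈ (0, d_e/2] exists for the isotropic (χ = 1) mean-field equation. -/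
open Real

lemma ring_aux_cont {f : ℝ → ℝ} (hf : ContinuousOn f (Set.Ici 0)) {R : ℝ} (hR : 0 ≤ R) :
    ContinuousOn (fun φ : ℝ =>
      f (R * Real.sqrt ((1 - Real.cos φ) ^ 2 + Real.sin φ ^ 2)) * (1 - Real.cos φ))
      (Set.uIcc 0 Real.pi) := by
  have hinner : Continuous (fun φ : ℝ =>
      R * Real.sqrt ((1 - Real.cos φ) ^ 2 + Real.sin φ ^ 2)) := by
    fun_prop
  have : ContinuousOn (fun φ : ℝ =>
      f (R * Real.sqrt ((1 - Real.cos φ) ^ 2 + Real.sin φ ^ 2))) (Set.uIcc 0 Real.pi) := by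
    refine hf.comp hinner.continuousOn ?_
    intro φ _
    exact mul_nonneg hR (Real.sqrt_nonneg _)
  exact this.mul (by fun_prop)

/-- For `f = f_A + f_R` with continuous `f_R ≥ 0`, `f_A ≤ 0`,
positive on `[0, d_a)`, nonpositive on `(d_a, ∞)` and strictly decreasing on
`[0, d_e]` (`0 < d_a < d_e`), there is at most one radius `R ∈ (0, d_e/2]`
with `G(R) = 0`; i.e. at most one nontrivial ring equilibrium of radius
`R ∈ (0, d_e/2]` exists for the isotropic (χ = 1) mean-field equation. -/
theorem ring_equilibrium_at_most_one
    (fA fR : ℝ → ℝ)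
    (hfA : ContinuousOn fA (Set.Ici 0)) (hfR : ContinuousOn fR (Set.Ici 0))
    (hfRpos : ∀ ρ ∈ Set.Ici (0:ℝ), 0 ≤ fR ρ)
    (hfAneg : ∀ ρ ∈ Set.Ici (0:ℝ), fA ρ ≤ 0)
    (da de : ℝ) (hda : 0 < da) (hdade : da < de)
    (hpos : ∀ ρ ∈ Set.Ico (0:ℝ) da, 0 < fA ρ + fR ρ)
    (hneg : ∀ ρ ∈ Set.Ioi da, fA ρ + fR ρ ≤ 0)
    (hdec : StrictAntiOn (fun ρ => fA ρ + fR ρ) (Set.Icc 0 de)) :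
    ∀ R₁ ∈ Set.Ioc (0:ℝ) (de / 2), ∀ R₂ ∈ Set.Ioc (0:ℝ) (de / 2),
      ringG (fun ρ => fA ρ + fR ρ) R₁ = 0 →
      ringG (fun ρ => fA ρ + fR ρ) R₂ = 0 → R₁ = R₂ := by
  set f : ℝ → ℝ := fun ρ => fA ρ + fR ρ with hfdef
  have hfc : ContinuousOn f (Set.Ici 0) := hfA.add hfR
  have hde : 0 < de := hda.trans hdade
  -- key strict monotonicity of ringG
  have key : ∀ S₁ S₂ : ℝ, 0 < S₁ → S₁ < S₂ → S₂ ≤ de / 2 →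
      ringG f S₂ < ringG f S₁ := by
    intro S₁ S₂ hS₁ h12 hS₂
    have hS₂0 : (0:ℝ) ≤ S₂ := (hS₁.trans h12).le
    have hc₁ := (ring_aux_cont hfc hS₁.le).intervalIntegrable (μ := MeasureTheory.volume)
    have hc₂ := (ring_aux_cont hfc hS₂0).intervalIntegrable (μ := MeasureTheory.volume)
    have hsub : 0 < ringG f S₁ - ringG f S₂ := by
      rw [ringG, ringG, ← intervalIntegral.integral_sub hc₁ hc₂]
      apply intervalIntegral.intervalIntegral_pos_of_pos_on (hc₁.sub hc₂) _ Real.pi_pos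
      intro φ hφ
      have hφ1 : 0 < φ := hφ.1
      have hφ2 : φ < Real.pi := hφ.2
      have hcos : Real.cos φ < 1 := by
        have h0 : (0:ℝ) ∈ Set.Icc 0 Real.pi := ⟨le_rfl, Real.pi_pos.le⟩
        have hφm : φ ∈ Set.Icc 0 Real.pi := ⟨hφ1.le, hφ2.le⟩
        have := Real.strictAntiOn_cos h0 hφm hφ1
        simpa using this
      have hw : 0 < 1 - Real.cos φ := by linarith
      set s := Real.sqrt ((1 - Real.cos φ) ^ 2 + Real.sin φ ^ 2) with hs
      have harg : (1 - Real.cos φ) ^ 2 + Real.sin φ ^ 2 = 2 - 2 * Real.cos φ := by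
        have := Real.sin_sq_add_cos_sq φ
        nlinarith
      have hspos : 0 < s := by
        rw [hs, harg]
        exact Real.sqrt_pos.mpr (by linarith)
      have hsle : s ≤ 2 := by
        have hnn : (0:ℝ) ≤ 2 - 2 * Real.cos φ := by linarith
        have hsq : s ^ 2 = 2 - 2 * Real.cos φ := by
          rw [hs, harg, Real.sq_sqrt hnn]
        have hco : -1 ≤ Real.cos φ := Real.neg_one_le_cos φ
        nlinarith [Real.sqrt_nonneg ((1 - Real.cos φ) ^ 2 + Real.sin φ ^ 2)]
      have hmem : ∀ S : ℝ, 0 ≤ S → S ≤ de / 2 → S * s ∈ Set.Icc 0 de := by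
        intro S hS0 hSle
        constructor
        · exact mul_nonneg hS0 hspos.le
        · calc S * s ≤ (de / 2) * 2 := by
                exact mul_le_mul hSle hsle hspos.le (by linarith)
            _ = de := by ring
      have hflt : f (S₂ * s) < f (S₁ * s) :=
        hdec (hmem S₁ hS₁.le (by linarith)) (hmem S₂ hS₂0 hS₂)
          (mul_lt_mul_of_pos_right h12 hspos)
      have : f (S₂ * s) * (1 - Real.cos φ) < f (S₁ * s) * (1 - Real.cos φ) :=
        mul_lt_mul_of_pos_right hflt hw
      simpa [hs] using sub_pos.mpr this
    linarith
  intro R₁ hR₁ R₂ hR₂ h1 h2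
  by_contra hne
  rcases lt_or_gt_of_ne hne with h | h
  · have := key R₁ R₂ hR₁.1 h hR₂.2
    rw [h1, h2] at this; exact lt_irrefl 0 this
  · have := key R₂ R₁ hR₂.1 h hR₁.2
    rw [h1, h2] at this; exact lt_irrefl 0 this
end

section
/- Let f = f_A + f_R with f_A, f_R : [0,∞) → ℝ continuous, f_R ≥ 0, f_A ≤ 0; assume there exist 0 < d_a < d_e such that f(ρ) > 0 for 0 ≤ ρ < d_a, f(ρ) ≤ 0 for ρ > d_a, and f is strictly decreasing on [0,d_e]. Define G(R) = ∫₀^π f(R √((1 − cos φ)² + sin² φ)) (1 − cos φ) dφ. If G(d_e/2) < 0, then there exists a unique R̄ ∈ (0, d_e/2] with G(R̄) = 0, and moreover R̄ ∈ (d_a/2, d_e/2]. -/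
/-!
Every argument `R ⋅ |e^{iφ} − 1|` of `f` in `G(R)` lies in `[0, 2R]`, and in `(0, 2R]` for
`φ ∈ (0, π]`. Hence on `[0, d_e/2]` the integrand decreases strictly in `R` on `(0, π]` against the
weight `1 − cos φ ≥ 0`, so `G` is strictly decreasing there. At `R = d_a/2` all arguments lie in
`[0, d_a]`, where `f ≥ 0` (with `f > 0` on `[0, d_a)`), so `G(d_a/2) > 0`. The intermediate value
theorem on `[d_a/2, d_e/2]` gives the zero and strict monotonicity its uniqueness.
-/

open Real

open Set

/-- `|e^{iφ} − 1|`, the chord of the unit circle subtending the angle `φ`. -/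
noncomputable def unitChord (φ : ℝ) : ℝ :=
  Real.sqrt ((1 - cos φ) ^ 2 + sin φ ^ 2)

lemma unitChord_nonneg (φ : ℝ) : 0 ≤ unitChord φ := Real.sqrt_nonneg _

lemma unitChord_le_two (φ : ℝ) : unitChord φ ≤ 2 := by
  rw [unitChord, Real.sqrt_le_left zero_le_two]
  nlinarith [neg_one_le_cos φ, sin_sq_add_cos_sq φ]

lemma unitChord_pos {φ : ℝ} (h₀ : 0 < φ) (hπ : φ ≤ π) : 0 < unitChord φ := by
  have hcos : cos φ < 1 := by
    simpa using strictAntiOn_cos ⟨le_rfl, pi_pos.le⟩ ⟨h₀.le, hπ⟩ h₀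
  exact Real.sqrt_pos.2 (by nlinarith [sin_sq_add_cos_sq φ])

lemma unitChord_pi_div_two_lt_two : unitChord (π / 2) < 2 := by
  rw [unitChord, cos_pi_div_two, sin_pi_div_two, Real.sqrt_lt' two_pos]
  norm_num

lemma continuous_unitChord : Continuous unitChord := by
  unfold unitChord; fun_prop

lemma mul_unitChord_mem_Icc {R d : ℝ} (hR : R ∈ Icc 0 (d / 2)) (φ : ℝ) :
    R * unitChord φ ∈ Icc 0 d :=
  ⟨mul_nonneg hR.1 (unitChord_nonneg φ), by
    nlinarith [hR.1, hR.2, unitChord_nonneg φ, unitChord_le_two φ]⟩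

noncomputable def ringIntegrand (f : ℝ → ℝ) (R φ : ℝ) : ℝ :=
  f (R * unitChord φ) * (1 - cos φ)

lemma ringG_eq_integral_ringIntegrand (f : ℝ → ℝ) (R : ℝ) :
    ringG f R = ∫ φ in (0:ℝ)..π, ringIntegrand f R φ := rfl

lemma continuous_ringIntegrand {f : ℝ → ℝ} {R d : ℝ} (hf : ContinuousOn f (Icc 0 d))
    (hR : R ∈ Icc 0 (d / 2)) : Continuous (ringIntegrand f R) :=
  (hf.comp_continuous (continuous_const.mul continuous_unitChord)
    (mul_unitChord_mem_Icc hR)).mul (continuous_const.sub continuous_cos)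

lemma continuousOn_ringG {f : ℝ → ℝ} (hf : ContinuousOn f (Ici 0)) :
    ContinuousOn (ringG f) (Ici 0) := by
  -- `x ↦ f (max x 0)` extends `f` continuously to `ℝ` and agrees with it where `ringG` samples.
  set g : ℝ → ℝ := fun x => f (max x 0)
  have hg : Continuous g :=
    hf.comp_continuous (continuous_id.max continuous_const) fun x => le_max_right x 0
  have hcont : Continuous (ringG g) :=
    intervalIntegral.continuous_parametric_intervalIntegral_of_continuous'
      ((hg.comp (continuous_fst.mul (continuous_unitChord.comp continuous_snd))).mul
        (continuous_const.sub (continuous_cos.comp continuous_snd))) _ _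
  refine hcont.continuousOn.congr fun R hR => intervalIntegral.integral_congr fun φ _ => ?_
  have hRφ : 0 ≤ R * unitChord φ := mul_nonneg hR (unitChord_nonneg φ)
  change ringIntegrand f R φ = ringIntegrand g R φ
  simp only [ringIntegrand, g, max_eq_left hRφ]

lemma ringG_strictAntiOn {f : ℝ → ℝ} {d : ℝ} (hf : ContinuousOn f (Icc 0 d))
    (hdec : StrictAntiOn f (Icc 0 d)) : StrictAntiOn (ringG f) (Icc 0 (d / 2)) := by
  intro R₁ hR₁ R₂ hR₂ hR
  have hstep : ∀ φ ∈ Ioc 0 π, f (R₂ * unitChord φ) < f (R₁ * unitChord φ) := fun φ hφ =>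
    hdec (mul_unitChord_mem_Icc hR₁ φ) (mul_unitChord_mem_Icc hR₂ φ)
      (mul_lt_mul_of_pos_right hR (unitChord_pos hφ.1 hφ.2))
  have hπ2 : π / 2 ∈ Ioc 0 π := ⟨by positivity, by linarith [pi_pos]⟩
  refine intervalIntegral.integral_lt_integral_of_continuousOn_of_le_of_exists_lt pi_pos
    (continuous_ringIntegrand hf hR₂).continuousOn (continuous_ringIntegrand hf hR₁).continuousOn
    (fun φ hφ => mul_le_mul_of_nonneg_right (hstep φ hφ).le (by linarith [cos_le_one φ]))
    ⟨π / 2, Ioc_subset_Icc_self hπ2, mul_lt_mul_of_pos_right (hstep _ hπ2) (by simp)⟩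

lemma ringG_half_pos {f : ℝ → ℝ} {d : ℝ} (hd : 0 < d) (hf : ContinuousOn f (Icc 0 d))
    (hpos : ∀ ρ ∈ Ico 0 d, 0 < f ρ) : 0 < ringG f (d / 2) := by
  have hnonneg : ∀ ρ ∈ Icc 0 d, 0 ≤ f ρ := fun ρ hρ =>
    ContinuousWithinAt.closure_le (by rwa [closure_Ico hd.ne]) continuousWithinAt_const
      ((hf ρ hρ).mono Ico_subset_Icc_self) fun y hy => (hpos y hy).le
  have hR : d / 2 ∈ Icc 0 (d / 2) := ⟨by positivity, le_rfl⟩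
  have hπ2 : 0 < f (d / 2 * unitChord (π / 2)) * (1 - cos (π / 2)) := by
    refine mul_pos (hpos _ ⟨(mul_unitChord_mem_Icc hR _).1, ?_⟩) (by simp)
    nlinarith [unitChord_pi_div_two_lt_two]
  rw [ringG_eq_integral_ringIntegrand]
  simpa using intervalIntegral.integral_lt_integral_of_continuousOn_of_le_of_exists_lt pi_pos
    continuousOn_const (continuous_ringIntegrand hf hR).continuousOn
    (fun φ _ => mul_nonneg (hnonneg _ (mul_unitChord_mem_Icc hR φ)) (by linarith [cos_le_one φ]))
    ⟨π / 2, ⟨by positivity, by linarith [pi_pos]⟩, hπ2⟩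

theorem ring_equilibrium_exists_unique_general
    (fA fR : ℝ → ℝ)
    (hfA : ContinuousOn fA (Set.Ici 0)) (hfR : ContinuousOn fR (Set.Ici 0))
    (da de : ℝ) (hda : 0 < da) (hdade : da < de)
    (hpos : ∀ ρ ∈ Set.Ico (0:ℝ) da, 0 < fA ρ + fR ρ)
    (hdec : StrictAntiOn (fun ρ => fA ρ + fR ρ) (Set.Icc 0 de))
    (hGneg : ringG (fun ρ => fA ρ + fR ρ) (de / 2) < 0) :
    ∃ Rbar : ℝ, Rbar ∈ Set.Ioc (0:ℝ) (de / 2)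
      ∧ ringG (fun ρ => fA ρ + fR ρ) Rbar = 0
      ∧ (∀ R ∈ Set.Ioc (0:ℝ) (de / 2),
          ringG (fun ρ => fA ρ + fR ρ) R = 0 → R = Rbar)
      ∧ Rbar ∈ Set.Ioc (da / 2) (de / 2) := by
  have hf : ContinuousOn (fun ρ => fA ρ + fR ρ) (Ici 0) := hfA.add hfR
  have hanti := ringG_strictAntiOn (hf.mono Icc_subset_Ici_self) hdec
  have hGpos := ringG_half_pos hda (hf.mono Icc_subset_Ici_self) hpos
  obtain ⟨Rbar, hRbar, hzero⟩ := intermediate_value_Icc' (by linarith : da / 2 ≤ de / 2)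
    ((continuousOn_ringG hf).mono fun R hR => (by positivity : (0:ℝ) ≤ da / 2).trans hR.1)
    ⟨hGneg.le, hGpos.le⟩
  have hlt : da / 2 < Rbar := hRbar.1.lt_of_ne (by rintro rfl; exact hGpos.ne' hzero)
  have hRbar_pos : 0 < Rbar := by linarith
  refine ⟨Rbar, ⟨hRbar_pos, hRbar.2⟩, hzero, fun R hR hR0 => ?_, hlt, hRbar.2⟩
  exact hanti.injOn ⟨hR.1.le, hR.2⟩ ⟨hRbar_pos.le, hRbar.2⟩ (hR0.trans hzero.symm)

/-- For `f = f_A + f_R` with continuous `f_R ≥ 0`, `f_A ≤ 0`,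
positive on `[0, d_a)`, nonpositive on `(d_a, ∞)` and strictly decreasing on
`[0, d_e]` (`0 < d_a < d_e`): if `G(d_e/2) < 0` then there is a unique
`R̄ ∈ (0, d_e/2]` with `G(R̄) = 0`, and this `R̄` lies in `(d_a/2, d_e/2]`. -/
theorem ring_equilibrium_exists_unique
    (fA fR : ℝ → ℝ)
    (hfA : ContinuousOn fA (Set.Ici 0)) (hfR : ContinuousOn fR (Set.Ici 0))
    (hfRpos : ∀ ρ ∈ Set.Ici (0:ℝ), 0 ≤ fR ρ)
    (hfAneg : ∀ ρ ∈ Set.Ici (0:ℝ), fA ρ ≤ 0)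
    (da de : ℝ) (hda : 0 < da) (hdade : da < de)
    (hpos : ∀ ρ ∈ Set.Ico (0:ℝ) da, 0 < fA ρ + fR ρ)
    (hneg : ∀ ρ ∈ Set.Ioi da, fA ρ + fR ρ ≤ 0)
    (hdec : StrictAntiOn (fun ρ => fA ρ + fR ρ) (Set.Icc 0 de))
    (hGneg : ringG (fun ρ => fA ρ + fR ρ) (de / 2) < 0) :
    ∃ Rbar : ℝ, Rbar ∈ Set.Ioc (0:ℝ) (de / 2)
      ∧ ringG (fun ρ => fA ρ + fR ρ) Rbar = 0
      ∧ (∀ R ∈ Set.Ioc (0:ℝ) (de / 2),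
          ringG (fun ρ => fA ρ + fR ρ) R = 0 → R = Rbar)
      ∧ Rbar ∈ Set.Ioc (da / 2) (de / 2) :=
  ring_equilibrium_exists_unique_general fA fR hfA hfR da de hda hdade hpos hdec hGneg
end

section
/- Let f_A, f_R : [0,∞) → ℝ be continuous with f_A ≤ 0, f_R ≥ 0, and assume there exists d_a > 0 with (f_A + f_R)(ρ) > 0 for all ρ ∈ [0, d_a). Let χ ∈ [0,1). Then for every R > 0 the two conditions ∫₀^π (f_A + f_R)(R √((1 − cos φ)² + sin² φ)) (1 − cos φ) dφ = 0 and ∫_{π/2}^{3π/2} (χ f_A + f_R)(R √(cos² φ + (1 − sin φ)²)) (1 − sin φ) dφ = 0 cannot hold simultaneously. In particular, no ring state of radius R > 0 is an equilibrium of the anisotropic mean-field equation for χ ∈ [0,1). -/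
open Real

/-- For continuous coefficients `f_A ≤ 0`, `f_R ≥ 0` with
`(f_A + f_R)(ρ) > 0` on `[0, d_a)` and anisotropy parameter `χ ∈ [0,1)`, for
every `R > 0` the two ring-equilibrium conditions — the horizontal condition
`∫₀^π (f_A+f_R)(R √((1−cos φ)² + sin² φ)) (1−cos φ) dφ = 0` and the vertical
condition `∫_{π/2}^{3π/2} (χ f_A + f_R)(R √(cos² φ + (1−sin φ)²)) (1−sin φ) dφ = 0`
— cannot hold simultaneously; hence no ring state of radius `R > 0` is an
equilibrium of the anisotropic mean-field equation for `χ ∈ [0,1)`. -/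
theorem no_ring_equilibrium_anisotropic
    (fA fR : ℝ → ℝ)
    (hfA : ContinuousOn fA (Set.Ici 0)) (hfR : ContinuousOn fR (Set.Ici 0))
    (hfAneg : ∀ ρ ∈ Set.Ici (0:ℝ), fA ρ ≤ 0)
    (hfRpos : ∀ ρ ∈ Set.Ici (0:ℝ), 0 ≤ fR ρ)
    (da : ℝ) (hda : 0 < da)
    (hpos : ∀ ρ ∈ Set.Ico (0:ℝ) da, 0 < fA ρ + fR ρ)
    (χ : ℝ) (hχ : χ ∈ Set.Ico (0:ℝ) 1)
    (R : ℝ) (hR : 0 < R) :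
    ¬ ((∫ φ in (0:ℝ)..Real.pi,
          (fA (R * Real.sqrt ((1 - Real.cos φ) ^ 2 + Real.sin φ ^ 2))
            + fR (R * Real.sqrt ((1 - Real.cos φ) ^ 2 + Real.sin φ ^ 2)))
            * (1 - Real.cos φ) = 0)
      ∧ (∫ φ in (Real.pi / 2)..(3 * Real.pi / 2),
          (χ * fA (R * Real.sqrt (Real.cos φ ^ 2 + (1 - Real.sin φ) ^ 2))
            + fR (R * Real.sqrt (Real.cos φ ^ 2 + (1 - Real.sin φ) ^ 2)))
            * (1 - Real.sin φ) = 0)) := by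
  rintro ⟨hH, hV⟩
  -- the radial argument
  set ρ : ℝ → ℝ := fun φ => R * Real.sqrt ((1 - Real.cos φ) ^ 2 + Real.sin φ ^ 2) with hρdef
  have hρc : Continuous ρ := by fun_prop
  have hρmem : ∀ φ, ρ φ ∈ Set.Ici (0:ℝ) := fun φ =>
    mul_nonneg hR.le (Real.sqrt_nonneg _)
  have hAc : Continuous (fun φ => fA (ρ φ) * (1 - Real.cos φ)) :=
    (hfA.comp_continuous hρc hρmem).mul (by fun_prop)
  have hRc : Continuous (fun φ => fR (ρ φ) * (1 - Real.cos φ)) :=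
    (hfR.comp_continuous hρc hρmem).mul (by fun_prop)
  -- rewrite the vertical condition as an integral over [0, π]
  have hV' : ∫ φ in (0:ℝ)..Real.pi,
      (χ * fA (ρ φ) + fR (ρ φ)) * (1 - Real.cos φ) = 0 := by
    have := intervalIntegral.integral_comp_add_right (a := 0) (b := Real.pi)
      (fun φ => (χ * fA (R * Real.sqrt (Real.cos φ ^ 2 + (1 - Real.sin φ) ^ 2))
            + fR (R * Real.sqrt (Real.cos φ ^ 2 + (1 - Real.sin φ) ^ 2)))
            * (1 - Real.sin φ)) (Real.pi / 2)
    rw [show (0:ℝ) + Real.pi / 2 = Real.pi / 2 by ring,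
      show Real.pi + Real.pi / 2 = 3 * Real.pi / 2 by ring, hV] at this
    refine Eq.trans ?_ this
    apply intervalIntegral.integral_congr
    intro φ _
    simp only [Real.cos_add_pi_div_two, Real.sin_add_pi_div_two, hρdef]
    ring_nf
  -- split into the fA-part and fR-part
  have hH' : (∫ φ in (0:ℝ)..Real.pi, fA (ρ φ) * (1 - Real.cos φ))
      + (∫ φ in (0:ℝ)..Real.pi, fR (ρ φ) * (1 - Real.cos φ)) = 0 := by
    rw [← intervalIntegral.integral_add (hAc.intervalIntegrable _ _)
      (hRc.intervalIntegrable _ _)]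
    refine Eq.trans ?_ hH
    apply intervalIntegral.integral_congr
    intro φ _; simp only [hρdef]; ring
  have hV'' : χ * (∫ φ in (0:ℝ)..Real.pi, fA (ρ φ) * (1 - Real.cos φ))
      + (∫ φ in (0:ℝ)..Real.pi, fR (ρ φ) * (1 - Real.cos φ)) = 0 := by
    rw [← intervalIntegral.integral_const_mul, ← intervalIntegral.integral_add
      (((hAc.intervalIntegrable _ _).const_mul χ))
      (hRc.intervalIntegrable _ _)]
    refine Eq.trans ?_ hV'
    apply intervalIntegral.integral_congr
    intro φ _; ring
  set IA := ∫ φ in (0:ℝ)..Real.pi, fA (ρ φ) * (1 - Real.cos φ)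
  set IR := ∫ φ in (0:ℝ)..Real.pi, fR (ρ φ) * (1 - Real.cos φ)
  have hIA : IA = 0 := by
    have h1 : (1 - χ) * IA = 0 := by linarith
    have : (1 - χ) ≠ 0 := by have := hχ.2; intro h; linarith
    exact (mul_eq_zero.mp h1).resolve_left this
  have hIR : IR = 0 := by linarith
  -- but IR > 0 : contradiction
  -- find δ > 0 where ρ φ < da
  have hρ0 : ρ 0 = 0 := by simp [hρdef]
  have hev : ∀ᶠ φ in nhds (0:ℝ), ρ φ < da := by
    have : ContinuousAt ρ 0 := hρc.continuousAt
    have := this.eventually_lt continuousAt_const (by rw [hρ0]; exact hda)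
    exact this
  obtain ⟨δ₀, hδ₀, hδball⟩ := Metric.eventually_nhds_iff.mp hev
  set δ := min (δ₀ / 2) Real.pi with hδdef
  have hπ := Real.pi_pos
  have hδpos : 0 < δ := lt_min (by linarith) hπ
  have hδπ : δ ≤ Real.pi := min_le_right _ _
  have hIRpos : 0 < IR := by
    have hsplit : IR = (∫ φ in (0:ℝ)..δ, fR (ρ φ) * (1 - Real.cos φ))
        + ∫ φ in δ..Real.pi, fR (ρ φ) * (1 - Real.cos φ) := by
      rw [intervalIntegral.integral_add_adjacent_intervals
        (hRc.intervalIntegrable _ _) (hRc.intervalIntegrable _ _)]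
    have h1 : 0 < ∫ φ in (0:ℝ)..δ, fR (ρ φ) * (1 - Real.cos φ) := by
      apply intervalIntegral.intervalIntegral_pos_of_pos_on
        (hRc.intervalIntegrable _ _) _ hδpos
      intro φ hφ
      have hφ0 : 0 < φ := hφ.1
      have hφπ : φ ≤ Real.pi := le_trans hφ.2.le hδπ
      have hcos : Real.cos φ < 1 := by
        have := Real.cos_lt_cos_of_nonneg_of_le_pi le_rfl hφπ hφ0
        simpa using this
      have hρφ : ρ φ < da := by
        apply hδball
        rw [Real.dist_eq, sub_zero, abs_of_pos hφ0]
        calc φ < δ := hφ.2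
          _ ≤ δ₀ / 2 := min_le_left _ _
          _ < δ₀ := by linarith
      have hfRφ : 0 < fR (ρ φ) := by
        have h1 := hpos (ρ φ) ⟨hρmem φ, hρφ⟩
        have h2 := hfAneg (ρ φ) (hρmem φ)
        linarith
      exact mul_pos hfRφ (by linarith)
    have h2 : 0 ≤ ∫ φ in δ..Real.pi, fR (ρ φ) * (1 - Real.cos φ) := by
      apply intervalIntegral.integral_nonneg hδπ
      intro φ hφ
      have hc : Real.cos φ ≤ 1 := Real.cos_le_one φ
      have := hfRpos (ρ φ) (hρmem φ)
      nlinarith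
    linarith
  linarith
end

section
/- Let f_A, f_R : [0,∞) → ℝ be continuous, let χ ∈ [0,1], R ≥ 0, r ≥ 0, and define F(d) = ((f_A+f_R)(|d|) d₁, (χ f_A + f_R)(|d|) d₂) for d = (d₁,d₂) ∈ ℝ². Then: (i) the vector integral ∫₀^{2π} F((R(1 − cos φ), −(R+r) sin φ)) w₂(φ,R,r) dφ equals zero if and only if ∫₀^π (f_A + f_R)(w₁(φ,R,r)) R (1 − cos φ) w₂(φ,R,r) dφ = 0; (ii) the vector integral ∫₀^{2π} F((−R cos φ, (R+r)(1 − sin φ))) w₂(φ,R,r) dφ equals zero if and only if ∫_{π/2}^{3π/2} (χ f_A + f_R)(w₃(φ,R,r)) (R+r)(1 − sin φ) w₂(φ,R,r) dφ = 0. -/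
open Real

/-- `w₁(φ,R,r) = √(R²(1 − cos φ)² + (R+r)² sin² φ)`. -/
noncomputable def w1 (φ R r : ℝ) : ℝ :=
  Real.sqrt (R ^ 2 * (1 - Real.cos φ) ^ 2 + (R + r) ^ 2 * Real.sin φ ^ 2)

/-- `w₂(φ,R,r) = √(R² sin² φ + (R+r)² cos² φ)`. -/
noncomputable def w2 (φ R r : ℝ) : ℝ :=
  Real.sqrt (R ^ 2 * Real.sin φ ^ 2 + (R + r) ^ 2 * Real.cos φ ^ 2)

/-- `w₃(φ,R,r) = √(R² cos² φ + (R+r)²(1 − sin φ)²)`. -/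
noncomputable def w3 (φ R r : ℝ) : ℝ :=
  Real.sqrt (R ^ 2 * Real.cos φ ^ 2 + (R + r) ^ 2 * (1 - Real.sin φ) ^ 2)

/-- The anisotropic force
`F(d) = ((f_A+f_R)(|d|) d₁, (χ f_A + f_R)(|d|) d₂)` for the tensor field
`T = diag(1,χ)`. -/
noncomputable def anisoForce (fA fR : ℝ → ℝ) (χ : ℝ) (d : ℝ × ℝ) : ℝ × ℝ :=
  ((fA (Real.sqrt (d.1 ^ 2 + d.2 ^ 2)) + fR (Real.sqrt (d.1 ^ 2 + d.2 ^ 2))) * d.1,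
   (χ * fA (Real.sqrt (d.1 ^ 2 + d.2 ^ 2)) + fR (Real.sqrt (d.1 ^ 2 + d.2 ^ 2))) * d.2)

lemma antisym_zero (h : ℝ → ℝ) (a b : ℝ) (hsym : ∀ x, h (a + b - x) = - h x) :
    ∫ x in a..b, h x = 0 := by
  have h1 : (∫ x in a..b, h (a + b - x)) = ∫ x in a + b - b..a + b - a, h x :=
    intervalIntegral.integral_comp_sub_left h (a + b)
  simp_rw [hsym] at h1
  rw [intervalIntegral.integral_neg, show a + b - b = a by ring, show a + b - a = b by ring] at h1
  linarith

lemma even_halve (h : ℝ → ℝ) (hc : Continuous h) (a m b : ℝ) (hab : a + b = m + m)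
    (hsym : ∀ x, h (a + b - x) = h x) :
    ∫ x in a..b, h x = 2 * ∫ x in m..b, h x := by
  have h1 : (∫ x in a..m, h x) = ∫ x in m..b, h x := by
    calc (∫ x in a..m, h x) = ∫ x in a..m, h (a + b - x) := by simp_rw [hsym]
    _ = ∫ x in a + b - m..a + b - a, h x := intervalIntegral.integral_comp_sub_left h (a + b)
    _ = ∫ x in m..b, h x := by rw [show a + b - m = m by linarith, show a + b - a = b by ring]
  have h2 := intervalIntegral.integral_add_adjacent_intervals (μ := MeasureTheory.volume)
    (hc.intervalIntegrable a m) (hc.intervalIntegrable m b)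
  linarith

lemma even_halve_left (h : ℝ → ℝ) (hc : Continuous h) (a m b : ℝ) (hab : a + b = m + m)
    (hsym : ∀ x, h (a + b - x) = h x) :
    ∫ x in a..b, h x = 2 * ∫ x in a..m, h x := by
  have h1 : (∫ x in a..m, h x) = ∫ x in m..b, h x := by
    calc (∫ x in a..m, h x) = ∫ x in a..m, h (a + b - x) := by simp_rw [hsym]
    _ = ∫ x in a + b - m..a + b - a, h x := intervalIntegral.integral_comp_sub_left h (a + b)
    _ = ∫ x in m..b, h x := by rw [show a + b - m = m by linarith, show a + b - a = b by ring]
  have h2 := intervalIntegral.integral_add_adjacent_intervals (μ := MeasureTheory.volume)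
    (hc.intervalIntegrable a m) (hc.intervalIntegrable m b)
  linarith

lemma pair_int (p q : ℝ → ℝ) (hp : Continuous p) (hq : Continuous q) (a b : ℝ) :
    (∫ φ in a..b, ((p φ, q φ) : ℝ × ℝ)) = (∫ φ in a..b, p φ, ∫ φ in a..b, q φ) := by
  have hint : IntervalIntegrable (fun φ => ((p φ, q φ) : ℝ × ℝ)) MeasureTheory.volume a b :=
    (hp.prodMk hq).intervalIntegrable a b
  ext
  · exact ((ContinuousLinearMap.fst ℝ ℝ ℝ).intervalIntegral_comp_comm hint).symm
  · exact ((ContinuousLinearMap.snd ℝ ℝ ℝ).intervalIntegral_comp_comm hint).symm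

/-- For the anisotropic force with parameter `χ ∈ [0,1]` and
`R, r ≥ 0`: (i) the vector equilibrium condition at the point `(R,0)` of the
ellipse (minor axis `R`, major axis `R+r`) is equivalent to the scalar
condition `∫₀^π (f_A+f_R)(w₁) R (1 − cos φ) w₂ dφ = 0`, and (ii) the vector
condition at the point `(0,R+r)` is equivalent to
`∫_{π/2}^{3π/2} (χ f_A + f_R)(w₃) (R+r)(1 − sin φ) w₂ dφ = 0`. -/
theorem ellipse_equilibrium_conditions
    (fA fR : ℝ → ℝ)
    (hfA : ContinuousOn fA (Set.Ici 0)) (hfR : ContinuousOn fR (Set.Ici 0))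
    (χ : ℝ) (hχ : χ ∈ Set.Icc (0:ℝ) 1)
    (R r : ℝ) (hR : 0 ≤ R) (hr : 0 ≤ r) :
    ((∫ φ in (0:ℝ)..(2 * Real.pi),
        w2 φ R r • anisoForce fA fR χ (R * (1 - Real.cos φ), -(R + r) * Real.sin φ)
        = (0 : ℝ × ℝ))
      ↔ ∫ φ in (0:ℝ)..Real.pi,
          (fA (w1 φ R r) + fR (w1 φ R r)) * (R * (1 - Real.cos φ)) * w2 φ R r = 0)
    ∧ ((∫ φ in (0:ℝ)..(2 * Real.pi),
        w2 φ R r • anisoForce fA fR χ (-(R * Real.cos φ), (R + r) * (1 - Real.sin φ))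
        = (0 : ℝ × ℝ))
      ↔ ∫ φ in (Real.pi / 2)..(3 * Real.pi / 2),
          (χ * fA (w3 φ R r) + fR (w3 φ R r)) * ((R + r) * (1 - Real.sin φ)) * w2 φ R r
          = 0) := by
  -- continuity facts
  have cw1 : Continuous fun φ => w1 φ R r := by
    unfold w1; exact Real.continuous_sqrt.comp (by continuity)
  have cw2 : Continuous fun φ => w2 φ R r := by
    unfold w2; exact Real.continuous_sqrt.comp (by continuity)
  have cw3 : Continuous fun φ => w3 φ R r := by
    unfold w3; exact Real.continuous_sqrt.comp (by continuity)
  have cA1 : Continuous fun φ => fA (w1 φ R r) :=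
    hfA.comp_continuous cw1 fun φ => Real.sqrt_nonneg _
  have cR1 : Continuous fun φ => fR (w1 φ R r) :=
    hfR.comp_continuous cw1 fun φ => Real.sqrt_nonneg _
  have cA3 : Continuous fun φ => fA (w3 φ R r) :=
    hfA.comp_continuous cw3 fun φ => Real.sqrt_nonneg _
  have cR3 : Continuous fun φ => fR (w3 φ R r) :=
    hfR.comp_continuous cw3 fun φ => Real.sqrt_nonneg _
  -- symmetry facts for w's
  have hw1s : ∀ x, w1 (2 * π - x) R r = w1 x R r := by
    intro x; unfold w1; congr 1
    rw [Real.cos_sub, Real.sin_sub, Real.cos_two_pi, Real.sin_two_pi]; ring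
  have hw2s : ∀ x, w2 (2 * π - x) R r = w2 x R r := by
    intro x; unfold w2; congr 1
    rw [Real.cos_sub, Real.sin_sub, Real.cos_two_pi, Real.sin_two_pi]; ring
  have hsin2 : ∀ x, Real.sin (2 * π - x) = - Real.sin x := by
    intro x; rw [Real.sin_sub, Real.cos_two_pi, Real.sin_two_pi]; ring
  have hcos2 : ∀ x, Real.cos (2 * π - x) = Real.cos x := by
    intro x; rw [Real.cos_sub, Real.cos_two_pi, Real.sin_two_pi]; ring
  have hw2p : ∀ x, w2 (π - x) R r = w2 x R r := by
    intro x; unfold w2; congr 1; rw [Real.cos_pi_sub, Real.sin_pi_sub]; ring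
  have hw3p : ∀ x, w3 (π - x) R r = w3 x R r := by
    intro x; unfold w3; congr 1; rw [Real.cos_pi_sub, Real.sin_pi_sub]; ring
  have hw2per : ∀ x, w2 (x + 2 * π) R r = w2 x R r := by
    intro x; unfold w2; rw [Real.sin_add_two_pi, Real.cos_add_two_pi]
  have hw3per : ∀ x, w3 (x + 2 * π) R r = w3 x R r := by
    intro x; unfold w3; rw [Real.sin_add_two_pi, Real.cos_add_two_pi]
  constructor
  · -- Part (i)
    set p1 : ℝ → ℝ := fun φ =>
      (fA (w1 φ R r) + fR (w1 φ R r)) * (R * (1 - Real.cos φ)) * w2 φ R r with hp1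
    set q1 : ℝ → ℝ := fun φ =>
      (χ * fA (w1 φ R r) + fR (w1 φ R r)) * (-(R + r) * Real.sin φ) * w2 φ R r with hq1
    have cp1 : Continuous p1 := by rw [hp1]; exact ((cA1.add cR1).mul (by continuity)).mul cw2
    have cq1 : Continuous q1 := by
      rw [hq1]
      exact (((continuous_const.mul cA1).add cR1).mul (by continuity)).mul cw2
    have heq1 : ∀ φ : ℝ,
        w2 φ R r • anisoForce fA fR χ (R * (1 - Real.cos φ), -(R + r) * Real.sin φ)
          = ((p1 φ, q1 φ) : ℝ × ℝ) := by
      intro φ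
      have hs : Real.sqrt ((R * (1 - Real.cos φ)) ^ 2 + (-(R + r) * Real.sin φ) ^ 2)
          = w1 φ R r := by unfold w1; congr 1; ring
      simp only [anisoForce, hp1, hq1, Prod.smul_mk, smul_eq_mul, Prod.mk.injEq]
      rw [hs]
      constructor <;> ring
    have hq1zero : (∫ φ in (0:ℝ)..(2 * π), q1 φ) = 0 := by
      apply antisym_zero q1 0 (2 * π)
      intro x
      rw [show (0:ℝ) + 2 * π - x = 2 * π - x by ring, hq1]
      simp only
      rw [hw1s, hw2s, hsin2]; ring
    have hhalf : (∫ φ in (0:ℝ)..(2 * π), p1 φ) = 2 * ∫ φ in (0:ℝ)..π, p1 φ := by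
      apply even_halve_left p1 cp1 0 π (2 * π) (by ring)
      intro x
      rw [show (0:ℝ) + 2 * π - x = 2 * π - x by ring, hp1]
      simp only
      rw [hw1s, hw2s, hcos2]
    rw [show (∫ φ in (0:ℝ)..(2 * Real.pi),
        w2 φ R r • anisoForce fA fR χ (R * (1 - Real.cos φ), -(R + r) * Real.sin φ))
        = ((∫ φ in (0:ℝ)..(2 * π), p1 φ), (∫ φ in (0:ℝ)..(2 * π), q1 φ)) from by
      rw [← pair_int p1 q1 cp1 cq1]; exact intervalIntegral.integral_congr fun φ _ => heq1 φ]
    rw [Prod.mk_eq_zero]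
    constructor
    · rintro ⟨h1, -⟩
      rw [hhalf] at h1; linarith
    · intro h
      exact ⟨by rw [hhalf, h, mul_zero], hq1zero⟩
  · -- Part (ii)
    set p2 : ℝ → ℝ := fun φ =>
      (fA (w3 φ R r) + fR (w3 φ R r)) * (-(R * Real.cos φ)) * w2 φ R r with hp2
    set q2 : ℝ → ℝ := fun φ =>
      (χ * fA (w3 φ R r) + fR (w3 φ R r)) * ((R + r) * (1 - Real.sin φ)) * w2 φ R r with hq2
    have cp2 : Continuous p2 := by rw [hp2]; exact ((cA3.add cR3).mul (by continuity)).mul cw2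
    have cq2 : Continuous q2 := by
      rw [hq2]
      exact (((continuous_const.mul cA3).add cR3).mul (by continuity)).mul cw2
    have heq2 : ∀ φ : ℝ,
        w2 φ R r • anisoForce fA fR χ (-(R * Real.cos φ), (R + r) * (1 - Real.sin φ))
          = ((p2 φ, q2 φ) : ℝ × ℝ) := by
      intro φ
      have hs : Real.sqrt ((-(R * Real.cos φ)) ^ 2 + ((R + r) * (1 - Real.sin φ)) ^ 2)
          = w3 φ R r := by unfold w3; congr 1; ring
      simp only [anisoForce, hp2, hq2, Prod.smul_mk, smul_eq_mul, Prod.mk.injEq]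
      rw [hs]
      constructor <;> ring
    have hperp2 : Function.Periodic p2 (2 * π) := by
      intro x; rw [hp2]; simp only
      rw [hw3per, hw2per, Real.cos_add_two_pi]
    have hperq2 : Function.Periodic q2 (2 * π) := by
      intro x; rw [hq2]; simp only
      rw [hw3per, hw2per, Real.sin_add_two_pi]
    have hshiftp : (∫ φ in (0:ℝ)..(2 * π), p2 φ) = ∫ φ in (-(π/2))..(3 * π / 2), p2 φ := by
      have := hperp2.intervalIntegral_add_eq 0 (-(π/2))
      rwa [zero_add, show -(π/2) + 2 * π = 3 * π / 2 by ring] at this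
    have hshiftq : (∫ φ in (0:ℝ)..(2 * π), q2 φ) = ∫ φ in (-(π/2))..(3 * π / 2), q2 φ := by
      have := hperq2.intervalIntegral_add_eq 0 (-(π/2))
      rwa [zero_add, show -(π/2) + 2 * π = 3 * π / 2 by ring] at this
    have hp2zero : (∫ φ in (-(π/2))..(3 * π / 2), p2 φ) = 0 := by
      apply antisym_zero p2 (-(π/2)) (3 * π / 2)
      intro x
      rw [show -(π/2) + 3 * π / 2 - x = π - x by ring, hp2]
      simp only
      rw [hw3p, hw2p, Real.cos_pi_sub]; ring
    have hhalf : (∫ φ in (-(π/2))..(3 * π / 2), q2 φ)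
        = 2 * ∫ φ in (π/2)..(3 * π / 2), q2 φ := by
      apply even_halve q2 cq2 (-(π/2)) (π/2) (3 * π / 2) (by ring)
      intro x
      rw [show -(π/2) + 3 * π / 2 - x = π - x by ring, hq2]
      simp only
      rw [hw3p, hw2p, Real.sin_pi_sub]
    rw [show (∫ φ in (0:ℝ)..(2 * Real.pi),
        w2 φ R r • anisoForce fA fR χ (-(R * Real.cos φ), (R + r) * (1 - Real.sin φ)))
        = ((∫ φ in (0:ℝ)..(2 * π), p2 φ), (∫ φ in (0:ℝ)..(2 * π), q2 φ)) from by
      rw [← pair_int p2 q2 cp2 cq2]; exact intervalIntegral.integral_congr fun φ _ => heq2 φ]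
    rw [Prod.mk_eq_zero, hshiftp, hshiftq, hp2zero, hhalf]
    constructor
    · rintro ⟨-, h2⟩; linarith
    · intro h
      exact ⟨rfl, by rw [h, mul_zero]⟩
end

section
/- Let f = f_A + f_R : [0,∞) → ℝ be continuous and strictly decreasing on [0,d_e] for some d_e > 0. Let r ≥ 0 and R_e > 0 be such that w₁(φ,R,r) ≤ d_e for all φ ∈ [0,π] and all R ∈ [0,R_e]. Then the functions R ↦ G₁(R,r) = ∫₀^π f(w₁(φ,R,r)) (1 − cos φ) dφ and R ↦ G₂(R,r) = ∫₀^π f(w₁(φ,R,r)) (1 − cos φ) cos² φ dφ are strictly decreasing on [0,R_e]. -/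
open Real

/-- `G₁(R,r) = ∫₀^π f(w₁(φ,R,r)) (1 − cos φ) dφ`. -/
noncomputable def G1 (f : ℝ → ℝ) (R r : ℝ) : ℝ :=
  ∫ φ in (0:ℝ)..Real.pi, f (w1 φ R r) * (1 - Real.cos φ)

/-- `G₂(R,r) = ∫₀^π f(w₁(φ,R,r)) (1 − cos φ) cos² φ dφ`. -/
noncomputable def G2 (f : ℝ → ℝ) (R r : ℝ) : ℝ :=
  ∫ φ in (0:ℝ)..Real.pi, f (w1 φ R r) * (1 - Real.cos φ) * Real.cos φ ^ 2

lemma w1_nonneg (φ R r : ℝ) : 0 ≤ w1 φ R r := Real.sqrt_nonneg _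

lemma w1_mono {R1 R2 : ℝ} (h1 : 0 ≤ R1) (h12 : R1 ≤ R2) (r : ℝ) (hr : 0 ≤ r) (φ : ℝ) :
    w1 φ R1 r ≤ w1 φ R2 r := by
  apply Real.sqrt_le_sqrt
  have h2 : 0 ≤ R2 := h1.trans h12
  have hA : R1 ^ 2 ≤ R2 ^ 2 := by nlinarith
  have hB : (R1 + r) ^ 2 ≤ (R2 + r) ^ 2 := by nlinarith
  have := sq_nonneg (1 - Real.cos φ)
  have := sq_nonneg (Real.sin φ)
  nlinarith

lemma w1_strict {R1 R2 : ℝ} (h1 : 0 ≤ R1) (h12 : R1 < R2) (r : ℝ) (hr : 0 ≤ r)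
    {φ : ℝ} (hφ : φ ∈ Set.Ioc 0 Real.pi) : w1 φ R1 r < w1 φ R2 r := by
  have hcos : Real.cos φ < 1 := by
    have := Real.strictAntiOn_cos (Set.left_mem_Icc.2 Real.pi_pos.le)
      ⟨hφ.1.le, hφ.2⟩ hφ.1
    simpa using this
  have h2 : 0 ≤ R2 := h1.trans h12.le
  apply Real.sqrt_lt_sqrt
  · positivity
  have hA : R1 ^ 2 * (1 - Real.cos φ) ^ 2 < R2 ^ 2 * (1 - Real.cos φ) ^ 2 := by
    have hc : (0:ℝ) < 1 - Real.cos φ := by linarith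
    have hsq : (0:ℝ) < (1 - Real.cos φ) ^ 2 := by positivity
    have hRR : R1 ^ 2 < R2 ^ 2 := by nlinarith
    exact mul_lt_mul_of_pos_right hRR hsq
  have hB : (R1 + r) ^ 2 * Real.sin φ ^ 2 ≤ (R2 + r) ^ 2 * Real.sin φ ^ 2 := by
    have : (R1 + r) ^ 2 ≤ (R2 + r) ^ 2 := by nlinarith
    have := sq_nonneg (Real.sin φ)
    nlinarith
  linarith

lemma w1_cont (R r : ℝ) : Continuous (fun φ => w1 φ R r) := by
  apply Real.continuous_sqrt.comp
  continuity

/-- If `f = f_A + f_R : [0,∞) → ℝ` is continuous and strictly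
decreasing on `[0, d_e]`, `r ≥ 0` and `R_e > 0` are such that
`w₁(φ,R,r) ≤ d_e` for all `φ ∈ [0,π]` and `R ∈ [0,R_e]`, then
`R ↦ G₁(R,r)` and `R ↦ G₂(R,r)` are strictly decreasing on `[0,R_e]`. -/
theorem G1_G2_strictAnti
    (f : ℝ → ℝ) (hf : ContinuousOn f (Set.Ici 0))
    (de : ℝ) (hde : 0 < de)
    (hdec : StrictAntiOn f (Set.Icc 0 de))
    (r : ℝ) (hr : 0 ≤ r) (Re : ℝ) (hRe : 0 < Re)
    (hw : ∀ φ ∈ Set.Icc (0:ℝ) Real.pi, ∀ R ∈ Set.Icc (0:ℝ) Re, w1 φ R r ≤ de) :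
    StrictAntiOn (fun R => G1 f R r) (Set.Icc 0 Re)
      ∧ StrictAntiOn (fun R => G2 f R r) (Set.Icc 0 Re) := by
  -- basic facts used in both parts
  have hmem : ∀ R ∈ Set.Icc (0:ℝ) Re, ∀ φ ∈ Set.Icc (0:ℝ) Real.pi,
      w1 φ R r ∈ Set.Icc 0 de := fun R hR φ hφ => ⟨w1_nonneg φ R r, hw φ hφ R hR⟩
  have hcont : ∀ R ∈ Set.Icc (0:ℝ) Re,
      ContinuousOn (fun φ => f (w1 φ R r)) (Set.Icc 0 Real.pi) := by
    intro R hR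
    exact hf.comp (w1_cont R r).continuousOn (fun φ _ => w1_nonneg φ R r)
  -- pointwise comparison
  have hle : ∀ R1 ∈ Set.Icc (0:ℝ) Re, ∀ R2 ∈ Set.Icc (0:ℝ) Re, R1 < R2 →
      ∀ φ ∈ Set.Ioc (0:ℝ) Real.pi, f (w1 φ R2 r) ≤ f (w1 φ R1 r) := by
    intro R1 hR1 R2 hR2 h12 φ hφ
    have hφ' : φ ∈ Set.Icc (0:ℝ) Real.pi := Set.Ioc_subset_Icc_self hφ
    exact hdec.antitoneOn (hmem R1 hR1 φ hφ') (hmem R2 hR2 φ hφ')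
      (w1_mono hR1.1 h12.le r hr φ)
  have hlt : ∀ R1 ∈ Set.Icc (0:ℝ) Re, ∀ R2 ∈ Set.Icc (0:ℝ) Re, R1 < R2 →
      f (w1 Real.pi R2 r) < f (w1 Real.pi R1 r) := by
    intro R1 hR1 R2 hR2 h12
    have hπ : Real.pi ∈ Set.Icc (0:ℝ) Real.pi := Set.right_mem_Icc.2 Real.pi_pos.le
    exact hdec (hmem R1 hR1 _ hπ) (hmem R2 hR2 _ hπ)
      (w1_strict hR1.1 h12 r hr ⟨Real.pi_pos, le_refl _⟩)
  constructor
  · intro R1 hR1 R2 hR2 h12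
    simp only [G1]
    apply intervalIntegral.integral_lt_integral_of_continuousOn_of_le_of_exists_lt
      Real.pi_pos
    · exact (hcont R2 hR2).mul (continuous_const.sub Real.continuous_cos).continuousOn
    · exact (hcont R1 hR1).mul (continuous_const.sub Real.continuous_cos).continuousOn
    · intro φ hφ
      have h1 : (0:ℝ) ≤ 1 - Real.cos φ := by
        have := Real.cos_le_one φ; linarith
      exact mul_le_mul_of_nonneg_right (hle R1 hR1 R2 hR2 h12 φ hφ) h1
    · refine ⟨Real.pi, Set.right_mem_Icc.2 Real.pi_pos.le, ?_⟩
      have h2 : (0:ℝ) < 1 - Real.cos Real.pi := by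
        rw [Real.cos_pi]; norm_num
      exact mul_lt_mul_of_pos_right (hlt R1 hR1 R2 hR2 h12) h2
  · intro R1 hR1 R2 hR2 h12
    simp only [G2]
    apply intervalIntegral.integral_lt_integral_of_continuousOn_of_le_of_exists_lt
      Real.pi_pos
    · exact ((hcont R2 hR2).mul
        (continuous_const.sub Real.continuous_cos).continuousOn).mul
        (Real.continuous_cos.pow 2).continuousOn
    · exact ((hcont R1 hR1).mul
        (continuous_const.sub Real.continuous_cos).continuousOn).mul
        (Real.continuous_cos.pow 2).continuousOn
    · intro φ hφ
      have h1 : (0:ℝ) ≤ 1 - Real.cos φ := by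
        have := Real.cos_le_one φ; linarith
      have h2 : (0:ℝ) ≤ Real.cos φ ^ 2 := sq_nonneg _
      exact mul_le_mul_of_nonneg_right
        (mul_le_mul_of_nonneg_right (hle R1 hR1 R2 hR2 h12 φ hφ) h1) h2
    · refine ⟨Real.pi, Set.right_mem_Icc.2 Real.pi_pos.le, ?_⟩
      have h2 : (0:ℝ) < 1 - Real.cos Real.pi := by
        rw [Real.cos_pi]; norm_num
      have h3 : (0:ℝ) < Real.cos Real.pi ^ 2 := by
        rw [Real.cos_pi]; norm_num
      exact mul_lt_mul_of_pos_right
        (mul_lt_mul_of_pos_right (hlt R1 hR1 R2 hR2 h12) h2) h3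
end

section
/- Let f = f_A + f_R : [0,∞) → ℝ be continuous and strictly decreasing on [0,d_e] for some d_e > 0. Let r ∈ [0,d_e) and R_e > 0 be such that w₁(φ,R,r) ≤ d_e for all φ ∈ [0,π] and all R ∈ [0,R_e]. Define G(R,r) = ∫₀^π f(w₁(φ,R,r)) (1 − cos φ)(R² + R r cos² φ) dφ. If G(R_e,r) < 0 and both G₁(0,r) > 0 and G₂(0,r) > 0, then there exists R ∈ (0,R_e) with G(R,r) = 0. -/
open Real

/-- `G(R,r) = ∫₀^π f(w₁(φ,R,r)) (1 − cos φ)(R² + R r cos² φ) dφ`. -/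
noncomputable def Gfun (f : ℝ → ℝ) (R r : ℝ) : ℝ :=
  ∫ φ in (0:ℝ)..Real.pi,
    f (w1 φ R r) * (1 - Real.cos φ) * (R ^ 2 + R * r * Real.cos φ ^ 2)

/-!
Writing `G(R,r) = R² G₁(R,r) + R r G₂(R,r)`, continuity of `G₁` and `G₂` in `R` (they are
parametric integrals of continuous integrands) keeps both positive for small `R > 0`, so `G` is
positive there. Since `G(R_e,r) < 0`, the intermediate value theorem gives the zero.
-/

open Filter Topology

lemma exists_mem_Ioo_eq_zero_of_eventually_pos {g : ℝ → ℝ} {b : ℝ} (hb : 0 < b)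
    (hg : ContinuousOn g (Set.Ioc 0 b)) (hpos : ∀ᶠ x in 𝓝[>] 0, 0 < g x) (hneg : g b < 0) :
    ∃ x ∈ Set.Ioo 0 b, g x = 0 := by
  obtain ⟨a, ha_pos, ⟨ha0, hab⟩⟩ := (hpos.and (Ioo_mem_nhdsGT hb)).exists
  obtain ⟨x, ⟨hax, hxb⟩, hx⟩ := intermediate_value_Ioo' hab.le
    (hg.mono (Set.Icc_subset_Ioc_left ha0)) ⟨hneg, ha_pos⟩
  exact ⟨x, ⟨ha0.trans hax, hxb⟩, hx⟩

section

variable {f : ℝ → ℝ} (hf : ContinuousOn f (Set.Ici 0)) (r : ℝ)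
include hf

lemma continuous_comp_w1 : Continuous fun p : ℝ × ℝ => f (w1 p.2 p.1 r) :=
  hf.comp_continuous (by unfold w1; fun_prop) fun _ => Real.sqrt_nonneg _

lemma continuous_G1 : Continuous fun R => G1 f R r :=
  intervalIntegral.continuous_parametric_intervalIntegral_of_continuous'
    ((continuous_comp_w1 hf r).mul (by fun_prop)) _ _

lemma continuous_G2 : Continuous fun R => G2 f R r :=
  intervalIntegral.continuous_parametric_intervalIntegral_of_continuous'
    (((continuous_comp_w1 hf r).mul (by fun_prop)).mul (by fun_prop)) _ _

lemma continuous_Gfun : Continuous fun R => Gfun f R r :=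
  intervalIntegral.continuous_parametric_intervalIntegral_of_continuous'
    (((continuous_comp_w1 hf r).mul (by fun_prop)).mul (by fun_prop)) _ _

lemma Gfun_eq (R : ℝ) : Gfun f R r = R ^ 2 * G1 f R r + R * r * G2 f R r := by
  have hw : Continuous fun φ => f (w1 φ R r) :=
    (continuous_comp_w1 hf r).comp (Continuous.prodMk_right R)
  have h1 : IntervalIntegrable
      (fun φ => R ^ 2 * (f (w1 φ R r) * (1 - cos φ))) MeasureTheory.volume 0 π :=
    (continuous_const.mul (hw.mul (by fun_prop))).intervalIntegrable _ _
  have h2 : IntervalIntegrable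
      (fun φ => R * r * (f (w1 φ R r) * (1 - cos φ) * cos φ ^ 2)) MeasureTheory.volume 0 π :=
    (continuous_const.mul ((hw.mul (by fun_prop)).mul (by fun_prop))).intervalIntegrable _ _
  unfold Gfun G1 G2
  rw [← intervalIntegral.integral_const_mul, ← intervalIntegral.integral_const_mul,
    ← intervalIntegral.integral_add h1 h2]
  congr 1; ext φ; ring

lemma eventually_pos_Gfun (hr : 0 ≤ r) (hG1 : 0 < G1 f 0 r) (hG2 : 0 < G2 f 0 r) :
    ∀ᶠ R in 𝓝[>] 0, 0 < Gfun f R r := by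
  have h1 := ((continuous_G1 hf r).tendsto 0).eventually_const_lt hG1
  have h2 := ((continuous_G2 hf r).tendsto 0).eventually_const_lt hG2
  filter_upwards [nhdsWithin_le_nhds h1, nhdsWithin_le_nhds h2, self_mem_nhdsWithin]
    with R hR1 hR2 (hR : 0 < R)
  rw [Gfun_eq hf]
  exact add_pos_of_pos_of_nonneg (mul_pos (pow_pos hR 2) hR1)
    (mul_nonneg (mul_nonneg hR.le hr) hR2.le)

end

theorem ellipse_equilibrium_exists_general
    (f : ℝ → ℝ) (hf : ContinuousOn f (Set.Ici 0))
    (de : ℝ)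
    (r : ℝ) (hr : r ∈ Set.Ico (0:ℝ) de) (Re : ℝ) (hRe : 0 < Re)
    (hGRe : Gfun f Re r < 0)
    (hG1 : 0 < G1 f 0 r) (hG2 : 0 < G2 f 0 r) :
    ∃ R ∈ Set.Ioo (0:ℝ) Re, Gfun f R r = 0 :=
  exists_mem_Ioo_eq_zero_of_eventually_pos hRe (continuous_Gfun hf r).continuousOn
    (eventually_pos_Gfun hf r hr.1 hG1 hG2) hGRe

/-- If `f = f_A + f_R` is continuous and strictly decreasing on
`[0,d_e]`, `r ∈ [0,d_e)` and `R_e > 0` satisfy `w₁(φ,R,r) ≤ d_e` for all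
`φ ∈ [0,π]`, `R ∈ [0,R_e]`, and `G(R_e,r) < 0`, `G₁(0,r) > 0`, `G₂(0,r) > 0`,
then there exists `R ∈ (0,R_e)` with `G(R,r) = 0`. -/
theorem ellipse_equilibrium_exists
    (f : ℝ → ℝ) (hf : ContinuousOn f (Set.Ici 0))
    (de : ℝ) (hde : 0 < de)
    (hdec : StrictAntiOn f (Set.Icc 0 de))
    (r : ℝ) (hr : r ∈ Set.Ico (0:ℝ) de) (Re : ℝ) (hRe : 0 < Re)
    (hw : ∀ φ ∈ Set.Icc (0:ℝ) Real.pi, ∀ R ∈ Set.Icc (0:ℝ) Re, w1 φ R r ≤ de)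
    (hGRe : Gfun f Re r < 0)
    (hG1 : 0 < G1 f 0 r) (hG2 : 0 < G2 f 0 r) :
    ∃ R ∈ Set.Ioo (0:ℝ) Re, Gfun f R r = 0 :=
  ellipse_equilibrium_exists_general f hf de r hr Re hRe hGRe hG1 hG2
end

section
/- Let f = f_A + f_R : [0,∞) → ℝ be continuous, and assume there exist 0 < d_a < d_e such that f(ρ) > 0 for all ρ ∈ [0,d_a) and f is strictly decreasing on [0,d_e]. Define ḡ(r) = ∫₀^π f(r |sin φ|) (1 − cos φ) |cos φ| dφ and assume ḡ(d_e) < 0. Then ḡ is strictly decreasing on [0,d_e], ḡ(r) > 0 for all r ∈ (0,d_a], and there exists a unique r̄ ∈ (0,d_e) with ḡ(r̄) = 0; moreover r̄ ∈ (d_a, d_e). -/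
open Real

/-- `ḡ(r) = ∫₀^π f(r |sin φ|) (1 − cos φ) |cos φ| dφ`, the necessary
condition functional for the degenerate pseudo-ellipse (vertical segment)
state. -/
noncomputable def gbar (f : ℝ → ℝ) (r : ℝ) : ℝ :=
  ∫ φ in (0:ℝ)..Real.pi, f (r * |Real.sin φ|) * (1 - Real.cos φ) * |Real.cos φ|

/-!
The weight `(1 - cos φ) |cos φ|` is nonnegative on `[0, π]` and positive at `φ = π/3`, so `ḡ`
inherits strict monotonicity from `f`. Where the weight is nonzero, `|sin φ| < 1`, so for
`r ≤ d_a` the integrand only samples `f` on `[0, d_a)`, where it is positive. Continuity of `ḡ`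
and the intermediate value theorem on `[d_a, d_e]` then give the zero, unique by monotonicity.
-/

open Set

lemma abs_sin_lt_one_of_cos_ne_zero {φ : ℝ} (h : cos φ ≠ 0) : |sin φ| < 1 := by
  apply abs_lt_of_sq_lt_sq _ zero_le_one
  have := sin_sq_add_cos_sq φ
  have : 0 < cos φ ^ 2 := by positivity
  linarith

lemma sin_pi_div_three_mem_Ioo : sin (π / 3) ∈ Ioo 0 1 := by
  rw [sin_pi_div_three]
  have : √3 < 2 := by
    rw [show (2 : ℝ) = √(2 ^ 2) by simp]
    exact sqrt_lt_sqrt (by norm_num) (by norm_num)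
  constructor <;> [positivity; linarith]

lemma continuous_comp_mul_abs_sin {f : ℝ → ℝ} (hf : ContinuousOn f (Ici 0)) {r : ℝ}
    (hr : 0 ≤ r) : Continuous fun φ => f (r * |sin φ|) :=
  hf.comp_continuous (by fun_prop) fun φ => mul_nonneg hr (abs_nonneg _)

lemma gbar_lt_gbar {f g : ℝ → ℝ} {r s : ℝ} (hf : Continuous fun φ => f (r * |sin φ|))
    (hg : Continuous fun φ => g (s * |sin φ|))
    (hle : ∀ φ, cos φ ≠ 0 → f (r * |sin φ|) ≤ g (s * |sin φ|))
    (hlt : f (r * sin (π / 3)) < g (s * sin (π / 3))) :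
    gbar f r < gbar g s := by
  have hweight : ∀ φ, 0 ≤ (1 - cos φ) * |cos φ| := fun φ =>
    mul_nonneg (sub_nonneg.2 (cos_le_one φ)) (abs_nonneg _)
  unfold gbar
  refine intervalIntegral.integral_lt_integral_of_continuousOn_of_le_of_exists_lt pi_pos
    ((hf.mul (by fun_prop)).mul (by fun_prop)).continuousOn
    ((hg.mul (by fun_prop)).mul (by fun_prop)).continuousOn (fun φ _ => ?_) ⟨π / 3, ⟨by positivity, by linarith [pi_pos]⟩, ?_⟩
  · by_cases hc : cos φ = 0
    · simp [hc]
    · simp only [mul_assoc]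
      exact mul_le_mul_of_nonneg_right (hle φ hc) (hweight φ)
  · rw [abs_of_pos sin_pi_div_three_mem_Ioo.1, cos_pi_div_three, mul_assoc, mul_assoc]
    exact mul_lt_mul_of_pos_right hlt (by norm_num)

lemma strictAntiOn_gbar {f : ℝ → ℝ} {d : ℝ} (hf : ContinuousOn f (Ici 0))
    (hdec : StrictAntiOn f (Icc 0 d)) : StrictAntiOn (gbar f) (Icc 0 d) := by
  have hmem : ∀ {r s}, r ∈ Icc 0 d → 0 ≤ s → s ≤ 1 → r * s ∈ Icc 0 d := fun hr hs hs1 =>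
    ⟨mul_nonneg hr.1 hs, (mul_le_of_le_one_right hr.1 hs1).trans hr.2⟩
  intro a ha b hb hab
  obtain ⟨hsin_pos, hsin_lt⟩ := sin_pi_div_three_mem_Ioo
  refine gbar_lt_gbar (continuous_comp_mul_abs_sin hf hb.1) (continuous_comp_mul_abs_sin hf ha.1)
    (fun φ _ => ?_) ?_
  · exact hdec.antitoneOn (hmem ha (abs_nonneg _) (abs_sin_le_one φ))
      (hmem hb (abs_nonneg _) (abs_sin_le_one φ)) (by gcongr)
  · exact hdec (hmem ha hsin_pos.le hsin_lt.le) (hmem hb hsin_pos.le hsin_lt.le) (by gcongr)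

lemma gbar_pos {f : ℝ → ℝ} {d r : ℝ} (hf : ContinuousOn f (Ici 0))
    (hpos : ∀ ρ ∈ Ico 0 d, 0 < f ρ) (hr : r ∈ Ioc 0 d) : 0 < gbar f r := by
  have hmem : ∀ {s}, 0 ≤ s → s < 1 → r * s ∈ Ico 0 d := fun hs hs1 =>
    ⟨mul_nonneg hr.1.le hs, (mul_lt_of_lt_one_right hr.1 hs1).trans_le hr.2⟩
  obtain ⟨hsin_pos, hsin_lt⟩ := sin_pi_div_three_mem_Ioo
  have hzero : gbar (fun _ => 0) r = 0 := by simp [gbar]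
  rw [← hzero]
  exact gbar_lt_gbar continuous_const (continuous_comp_mul_abs_sin hf hr.1.le)
    (fun φ hc => (hpos _ (hmem (abs_nonneg _) (abs_sin_lt_one_of_cos_ne_zero hc))).le)
    (hpos _ (hmem hsin_pos.le hsin_lt))

lemma continuous_gbar {f : ℝ → ℝ} (hf : Continuous f) : Continuous (gbar f) :=
  intervalIntegral.continuous_parametric_intervalIntegral_of_continuous' (by fun_prop) 0 π

lemma gbar_congr {f g : ℝ → ℝ} (hfg : EqOn f g (Ici 0)) {r : ℝ} (hr : 0 ≤ r) :
    gbar f r = gbar g r := by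
  unfold gbar
  congr 1 with φ
  rw [hfg (mul_nonneg hr (abs_nonneg _))]

lemma continuousOn_gbar {f : ℝ → ℝ} (hf : ContinuousOn f (Ici 0)) :
    ContinuousOn (gbar f) (Ici 0) := by
  have hext : Continuous fun ρ => f (max ρ 0) :=
    hf.comp_continuous (by fun_prop) fun ρ => le_max_right ρ 0
  refine (continuous_gbar hext).continuousOn.congr fun r hr => gbar_congr (fun ρ hρ => ?_) hr
  simp [max_eq_left (mem_Ici.1 hρ)]

/-- If `f = f_A + f_R` is continuous, positive on `[0,d_a)` and
strictly decreasing on `[0,d_e]` with `0 < d_a < d_e`, and `ḡ(d_e) < 0`, then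
`ḡ` is strictly decreasing on `[0,d_e]`, positive on `(0,d_a]`, and there is
a unique `r̄ ∈ (0,d_e)` with `ḡ(r̄) = 0`; moreover `r̄ ∈ (d_a,d_e)`. -/
theorem pseudo_ellipse_condition
    (f : ℝ → ℝ) (hf : ContinuousOn f (Set.Ici 0))
    (da de : ℝ) (hda : 0 < da) (hdade : da < de)
    (hpos : ∀ ρ ∈ Set.Ico (0:ℝ) da, 0 < f ρ)
    (hdec : StrictAntiOn f (Set.Icc 0 de))
    (hgde : gbar f de < 0) :
    StrictAntiOn (gbar f) (Set.Icc 0 de)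
      ∧ (∀ r ∈ Set.Ioc (0:ℝ) da, 0 < gbar f r)
      ∧ ∃ rbar : ℝ, rbar ∈ Set.Ioo (0:ℝ) de ∧ gbar f rbar = 0
          ∧ (∀ r ∈ Set.Ioo (0:ℝ) de, gbar f r = 0 → r = rbar)
          ∧ rbar ∈ Set.Ioo da de := by
  have hanti := strictAntiOn_gbar hf hdec
  have hgpos : ∀ r ∈ Ioc 0 da, 0 < gbar f r := fun r hr => gbar_pos hf hpos hr
  have hcont : ContinuousOn (gbar f) (Icc da de) :=
    (continuousOn_gbar hf).mono fun r hr => hda.le.trans hr.1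
  obtain ⟨rbar, hrbar, hzero⟩ :=
    intermediate_value_Ioo' hdade.le hcont ⟨hgde, hgpos da ⟨hda, le_rfl⟩⟩
  have hrbar_pos : 0 < rbar := hda.trans hrbar.1
  refine ⟨hanti, hgpos, rbar, ⟨hrbar_pos, hrbar.2⟩, hzero, fun r hr hr0 => ?_, hrbar⟩
  exact hanti.injOn (Ioo_subset_Icc_self hr) ⟨hrbar_pos.le, hrbar.2.le⟩ (hr0.trans hzero.symm)
end

section
/- Let r̄ > 0, and let f_A, f_R : [0,∞) → ℝ be continuous with f_A(ρ) < 0 for all ρ > 0, f_R ≥ 0, and f_R(ρ) > 0 for all ρ ∈ [0,d_a) for some d_a > 0. Assume ∫_{π/2}^{3π/2} (f_A + f_R)(r̄(1 − sin φ)) (1 − sin φ) |cos φ| dφ < 0. Then there exists exactly one χ ∈ ℝ such that ∫_{π/2}^{3π/2} (χ f_A + f_R)(r̄(1 − sin φ)) (1 − sin φ) |cos φ| dφ = 0; it is given by χ̄ = − (∫_{π/2}^{3π/2} f_R(r̄(1 − sin φ)) (1 − sin φ) |cos φ| dφ) / (∫_{π/2}^{3π/2} f_A(r̄(1 − sin φ))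 (1 − sin φ) |cos φ| dφ), and it satisfies 0 < χ̄ < 1. -/
/-
The integral is affine in `χ`: it equals `χ A + R` with `A = ∫ f_A(r̄(1 - sin φ)) w(φ) dφ` and
`R = ∫ f_R(r̄(1 - sin φ)) w(φ) dφ`, where `w(φ) = (1 - sin φ)|cos φ| ≥ 0`. The weight is positive
on the open interval, so `A < 0` because `f_A < 0` away from `0`, and `R > 0` because `f_R ≥ 0`
and `f_R(0) > 0` (the integrand is positive just to the right of `π / 2`). Hence the unique root
is `χ̄ = -R / A > 0`, and the hypothesis `A + R < 0` is exactly `χ̄ < 1`.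
-/

open Real

open Set Filter Topology

noncomputable def equilibriumIntegrand (r : ℝ) (f : ℝ → ℝ) (φ : ℝ) : ℝ :=
  f (r * (1 - sin φ)) * (1 - sin φ) * |cos φ|

noncomputable def equilibriumIntegral (r : ℝ) (f : ℝ → ℝ) : ℝ :=
  ∫ φ in (π / 2)..(3 * π / 2), equilibriumIntegrand r f φ

section

variable {r : ℝ} {f g : ℝ → ℝ}

theorem continuous_equilibriumIntegrand (hr : 0 ≤ r) (hf : ContinuousOn f (Ici 0)) :
    Continuous (equilibriumIntegrand r f) := by
  have hu : Continuous fun φ => r * (1 - sin φ) := by fun_prop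
  have hf_u := hf.comp_continuous hu fun φ => mul_nonneg hr (sub_nonneg.2 (sin_le_one φ))
  exact (hf_u.mul (by fun_prop)).mul (by fun_prop)

theorem equilibriumIntegral_add (hr : 0 ≤ r) (hf : ContinuousOn f (Ici 0))
    (hg : ContinuousOn g (Ici 0)) :
    equilibriumIntegral r (fun ρ => f ρ + g ρ) =
      equilibriumIntegral r f + equilibriumIntegral r g := by
  unfold equilibriumIntegral
  rw [← intervalIntegral.integral_add
    ((continuous_equilibriumIntegrand hr hf).intervalIntegrable _ _)
    ((continuous_equilibriumIntegrand hr hg).intervalIntegrable _ _)]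
  simp only [equilibriumIntegrand, add_mul]

theorem equilibriumIntegral_const_mul (c : ℝ) :
    equilibriumIntegral r (fun ρ => c * f ρ) = c * equilibriumIntegral r f := by
  unfold equilibriumIntegral
  rw [← intervalIntegral.integral_const_mul]
  simp only [equilibriumIntegrand, mul_assoc]

theorem equilibriumIntegrand_pi : equilibriumIntegrand r f π = f r := by
  simp [equilibriumIntegrand]

theorem equilibriumIntegrand_nonpos (hr : 0 < r) (hf : ∀ ρ, 0 < ρ → f ρ ≤ 0) (φ : ℝ) :
    equilibriumIntegrand r f φ ≤ 0 := by
  rcases (sin_le_one φ).lt_or_eq with hsin | hsin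
  · have hw : 0 ≤ (1 - sin φ) * |cos φ| := by
      have : 0 < 1 - sin φ := by linarith
      positivity
    rw [equilibriumIntegrand, mul_assoc]
    exact mul_nonpos_of_nonpos_of_nonneg (hf _ (mul_pos hr (by linarith))) hw
  · simp [equilibriumIntegrand, hsin]

theorem equilibriumIntegrand_nonneg (hr : 0 ≤ r) (hf : ∀ ρ ∈ Ici (0 : ℝ), 0 ≤ f ρ) (φ : ℝ) :
    0 ≤ equilibriumIntegrand r f φ := by
  have hsin : 0 ≤ 1 - sin φ := sub_nonneg.2 (sin_le_one φ)
  have := hf _ (mul_nonneg hr hsin)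
  unfold equilibriumIntegrand
  positivity

theorem equilibriumIntegral_neg (hr : 0 < r) (hf : ContinuousOn f (Ici 0))
    (hneg : ∀ ρ, 0 < ρ → f ρ < 0) : equilibriumIntegral r f < 0 := by
  have hpi := pi_pos
  have h := intervalIntegral.integral_lt_integral_of_continuousOn_of_le_of_exists_lt
    (f := equilibriumIntegrand r f) (g := 0) (a := π / 2) (b := 3 * π / 2) (by linarith)
    (continuous_equilibriumIntegrand hr.le hf).continuousOn continuousOn_const
    (fun φ _ => equilibriumIntegrand_nonpos hr (fun ρ hρ => (hneg ρ hρ).le) φ)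
    ⟨π, ⟨by linarith, by linarith⟩, by simpa [equilibriumIntegrand_pi] using hneg r hr⟩
  simpa [equilibriumIntegral] using h

theorem exists_equilibriumIntegrand_pos (hr : 0 ≤ r) (hf : ContinuousOn f (Ici 0))
    (h0 : 0 < f 0) : ∃ φ ∈ Icc (π / 2) (3 * π / 2), 0 < equilibriumIntegrand r f φ := by
  have hu : Continuous fun φ => r * (1 - sin φ) := by fun_prop
  have hf_u := hf.comp_continuous hu fun φ => mul_nonneg hr (sub_nonneg.2 (sin_le_one φ))
  -- the weight vanishes at `π / 2`, so `0 < f 0` is only used at nearby interior points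
  have hpos : ∀ᶠ φ in 𝓝[>] (π / 2), 0 < f (r * (1 - sin φ)) :=
    nhdsWithin_le_nhds (continuousAt_const.eventually_lt hf_u.continuousAt (by simpa using h0))
  have hIoo : ∀ᶠ φ in 𝓝[>] (π / 2), φ ∈ Ioo (π / 2) (3 * π / 2) :=
    Ioo_mem_nhdsGT (by linarith [pi_pos])
  obtain ⟨φ, hfφ, hφ⟩ := (hpos.and hIoo).exists
  have hcos : cos φ < 0 := cos_neg_of_pi_div_two_lt_of_lt hφ.1 (by linarith [hφ.2])
  have hsin : sin φ < 1 := by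
    by_contra! h
    nlinarith [sin_sq_add_cos_sq φ, sin_le_one φ]
  refine ⟨φ, Ioo_subset_Icc_self hφ, ?_⟩
  have : 0 < 1 - sin φ := by linarith
  have : 0 < |cos φ| := abs_pos.2 hcos.ne
  unfold equilibriumIntegrand
  positivity

theorem equilibriumIntegral_pos (hr : 0 ≤ r) (hf : ContinuousOn f (Ici 0))
    (hnonneg : ∀ ρ ∈ Ici (0 : ℝ), 0 ≤ f ρ) (h0 : 0 < f 0) : 0 < equilibriumIntegral r f := by
  have h := intervalIntegral.integral_lt_integral_of_continuousOn_of_le_of_exists_lt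
    (f := 0) (g := equilibriumIntegrand r f) (by linarith [pi_pos])
    continuousOn_const (continuous_equilibriumIntegrand hr hf).continuousOn
    (fun φ _ => equilibriumIntegrand_nonneg hr hnonneg φ)
    (exists_equilibriumIntegrand_pos hr hf h0)
  simpa [equilibriumIntegral] using h

end

theorem neg_div_mem_Ioo_of_add_neg {A R : ℝ} (hA : A < 0) (hR : 0 < R) (hAR : A + R < 0) :
    -R / A ∈ Ioo 0 1 := by
  constructor
  · exact div_pos_of_neg_of_neg (neg_neg_of_pos hR) hA
  · rw [div_lt_one_of_neg hA]
    linarith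

/-- Let `r̄ > 0`, `f_A < 0` on `(0,∞)`, `f_R ≥ 0` with
`f_R > 0` on `[0,d_a)`, and suppose
`∫_{π/2}^{3π/2} (f_A + f_R)(r̄(1 − sin φ)) (1 − sin φ) |cos φ| dφ < 0`.
Then there is exactly one `χ ∈ ℝ` with
`∫_{π/2}^{3π/2} (χ f_A + f_R)(r̄(1 − sin φ)) (1 − sin φ) |cos φ| dφ = 0`,
given by `χ̄ = −(∫ f_R ⋯)/(∫ f_A ⋯)`, and it satisfies `0 < χ̄ < 1`. -/
theorem pseudo_ellipse_unique_chi
    (rbar : ℝ) (hrbar : 0 < rbar)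
    (fA fR : ℝ → ℝ)
    (hfA : ContinuousOn fA (Set.Ici 0)) (hfR : ContinuousOn fR (Set.Ici 0))
    (hfAneg : ∀ ρ : ℝ, 0 < ρ → fA ρ < 0)
    (hfRnonneg : ∀ ρ ∈ Set.Ici (0:ℝ), 0 ≤ fR ρ)
    (da : ℝ) (hda : 0 < da)
    (hfRpos : ∀ ρ ∈ Set.Ico (0:ℝ) da, 0 < fR ρ)
    (hattr : ∫ φ in (Real.pi / 2)..(3 * Real.pi / 2),
        (fA (rbar * (1 - Real.sin φ)) + fR (rbar * (1 - Real.sin φ)))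
          * (1 - Real.sin φ) * |Real.cos φ| < 0) :
    (∫ φ in (Real.pi / 2)..(3 * Real.pi / 2),
        ((-(∫ φ' in (Real.pi / 2)..(3 * Real.pi / 2),
              fR (rbar * (1 - Real.sin φ')) * (1 - Real.sin φ') * |Real.cos φ'|)
           / (∫ φ' in (Real.pi / 2)..(3 * Real.pi / 2),
              fA (rbar * (1 - Real.sin φ')) * (1 - Real.sin φ') * |Real.cos φ'|))
          * fA (rbar * (1 - Real.sin φ)) + fR (rbar * (1 - Real.sin φ)))
          * (1 - Real.sin φ) * |Real.cos φ| = 0)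
    ∧ (∀ χ : ℝ,
        (∫ φ in (Real.pi / 2)..(3 * Real.pi / 2),
          (χ * fA (rbar * (1 - Real.sin φ)) + fR (rbar * (1 - Real.sin φ)))
            * (1 - Real.sin φ) * |Real.cos φ| = 0) →
        χ = -(∫ φ' in (Real.pi / 2)..(3 * Real.pi / 2),
              fR (rbar * (1 - Real.sin φ')) * (1 - Real.sin φ') * |Real.cos φ'|)
           / (∫ φ' in (Real.pi / 2)..(3 * Real.pi / 2),
              fA (rbar * (1 - Real.sin φ')) * (1 - Real.sin φ') * |Real.cos φ'|))
    ∧ 0 < -(∫ φ' in (Real.pi / 2)..(3 * Real.pi / 2),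
              fR (rbar * (1 - Real.sin φ')) * (1 - Real.sin φ') * |Real.cos φ'|)
           / (∫ φ' in (Real.pi / 2)..(3 * Real.pi / 2),
              fA (rbar * (1 - Real.sin φ')) * (1 - Real.sin φ') * |Real.cos φ'|)
    ∧ -(∫ φ' in (Real.pi / 2)..(3 * Real.pi / 2),
              fR (rbar * (1 - Real.sin φ')) * (1 - Real.sin φ') * |Real.cos φ'|)
           / (∫ φ' in (Real.pi / 2)..(3 * Real.pi / 2),
              fA (rbar * (1 - Real.sin φ')) * (1 - Real.sin φ') * |Real.cos φ'|) < 1 := by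
  set A := equilibriumIntegral rbar fA
  set R := equilibriumIntegral rbar fR
  have hA : A < 0 := equilibriumIntegral_neg hrbar hfA hfAneg
  have hR : 0 < R := equilibriumIntegral_pos hrbar.le hfR hfRnonneg (hfRpos 0 ⟨le_rfl, hda⟩)
  have hlin (χ : ℝ) : equilibriumIntegral rbar (fun ρ => χ * fA ρ + fR ρ) = χ * A + R := by
    rw [equilibriumIntegral_add (f := fun ρ => χ * fA ρ) hrbar.le (continuousOn_const.mul hfA) hfR,
      equilibriumIntegral_const_mul]
  have hAR : A + R < 0 := by
    rw [← equilibriumIntegral_add hrbar.le hfA hfR]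
    exact hattr
  change equilibriumIntegral rbar (fun ρ => -R / A * fA ρ + fR ρ) = 0
    ∧ (∀ χ : ℝ, equilibriumIntegral rbar (fun ρ => χ * fA ρ + fR ρ) = 0 → χ = -R / A)
    ∧ -R / A ∈ Set.Ioo 0 1
  refine ⟨?_, fun χ hχ => ?_, neg_div_mem_Ioo_of_add_neg hA hR hAR⟩
  · rw [hlin, div_mul_cancel₀ _ hA.ne, neg_add_cancel]
  · rw [hlin] at hχ
    rw [eq_div_iff hA.ne]
    linarith
end

section
/- Let f = f_A + f_R : [0,∞) → ℝ be continuous, let d_e > 0, R_e > 0, and define G(R,r) = ∫₀^π f(w₁(φ,R,r)) (1 − cos φ)(R² + R r cos² φ) dφ for R ∈ [0,R_e], r ∈ [0,d_e). Assume: (i) for each r ∈ [0,d_e) there exists R_int(r) ∈ (0,R_e) such that G(·,r) is strictly increasing on (0,R_int(r)) and strictly decreasing on (R_int(r),R_e); (ii) whenever G(R̃,r̃) = 0 with R̃ > 0 and r̃ < r < d_e, then G(R̃,r) < 0. Let 0 ≤ r₁ < r₂ < d_e and let R₁, R₂ ∈ (0,R_e) satisfy G(R₁,r₁) = 0 and G(R₂,r₂)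 = 0. Then R₂ < R₁; i.e. the longer the major axis of a stationary ellipse state, the shorter its minor axis. -/
open Real

lemma Gfun_zero (f : ℝ → ℝ) (r : ℝ) : Gfun f 0 r = 0 := by
  simp [Gfun]

lemma Gfun_continuous (f : ℝ → ℝ) (hf : ContinuousOn f (Set.Ici 0)) (r : ℝ) :
    Continuous fun R => Gfun f R r := by
  have hw : Continuous fun p : ℝ × ℝ => w1 p.2 p.1 r := by
    unfold w1; fun_prop
  have hfw : Continuous fun p : ℝ × ℝ => f (w1 p.2 p.1 r) :=
    hf.comp_continuous hw fun p => Real.sqrt_nonneg _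
  have hF : Continuous (Function.uncurry fun R φ =>
      f (w1 φ R r) * (1 - Real.cos φ) * (R ^ 2 + R * r * Real.cos φ ^ 2)) :=
    (hfw.mul (by fun_prop)).mul (by fun_prop)
  exact intervalIntegral.continuous_parametric_intervalIntegral_of_continuous' hF 0 Real.pi

/-- On `(0, Rint]` the function `G(·,r)` is strictly positive, given the shape
assumption and `G(0,r) = 0`, using continuity. -/
lemma Gfun_pos_on_Ioc (f : ℝ → ℝ) (hf : ContinuousOn f (Set.Ici 0)) (r Rint : ℝ)
    (hRint : 0 < Rint)
    (hmono : StrictMonoOn (fun R => Gfun f R r) (Set.Ioo 0 Rint)) :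
    ∀ R ∈ Set.Ioc (0:ℝ) Rint, 0 < Gfun f R r := by
  set g : ℝ → ℝ := fun R => Gfun f R r with hg
  have hgc : Continuous g := Gfun_continuous f hf r
  -- first: g is nonnegative on Ioo 0 Rint, by taking the limit from the right at 0
  have hnonneg : ∀ R ∈ Set.Ioo (0:ℝ) Rint, 0 ≤ g R := by
    intro R hR
    have htend : Filter.Tendsto g (nhdsWithin 0 (Set.Ioo 0 R)) (nhds (g 0)) :=
      (hgc.tendsto 0).mono_left nhdsWithin_le_nhds
    have hne : (nhdsWithin (0:ℝ) (Set.Ioo 0 R)).NeBot := left_nhdsWithin_Ioo_neBot hR.1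
    have hle : ∀ᶠ x in nhdsWithin (0:ℝ) (Set.Ioo 0 R), g x ≤ g R := by
      filter_upwards [self_mem_nhdsWithin] with x hx
      exact le_of_lt (hmono ⟨hx.1, lt_trans hx.2 hR.2⟩ hR hx.2)
    have := le_of_tendsto htend hle
    simpa [hg, Gfun_zero] using this
  -- strict positivity on Ioo: compare with the midpoint
  have hpos : ∀ R ∈ Set.Ioo (0:ℝ) Rint, 0 < g R := by
    intro R hR
    have hmid : R / 2 ∈ Set.Ioo (0:ℝ) Rint :=
      ⟨by linarith [hR.1], by linarith [hR.1, hR.2]⟩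
    calc (0:ℝ) ≤ g (R / 2) := hnonneg _ hmid
      _ < g R := hmono hmid hR (by linarith [hR.1])
  -- positivity at the endpoint Rint, by taking the limit from the left
  intro R hR
  rcases eq_or_lt_of_le hR.2 with hEq | hlt
  · subst hEq
    have hmid : R / 2 ∈ Set.Ioo (0:ℝ) R := ⟨by linarith [hR.1], by linarith [hR.1]⟩
    have htend : Filter.Tendsto g (nhdsWithin R (Set.Ioo (R/2) R)) (nhds (g R)) :=
      (hgc.tendsto R).mono_left nhdsWithin_le_nhds
    have hne : (nhdsWithin R (Set.Ioo (R/2) R)).NeBot :=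
      right_nhdsWithin_Ioo_neBot (by linarith [hR.1])
    have hle : ∀ᶠ x in nhdsWithin R (Set.Ioo (R/2) R), g (R/2) ≤ g x := by
      filter_upwards [self_mem_nhdsWithin] with x hx
      exact le_of_lt (hmono ⟨by linarith [hR.1], by linarith [hx.2]⟩
        ⟨by linarith [hR.1, hx.1], hx.2⟩ hx.1)
    have h1 : g (R/2) ≤ g R := ge_of_tendsto htend hle
    have h2 : 0 < g (R/2) := hpos _ ⟨by linarith [hR.1], by linarith [hR.1]⟩
    linarith
  · exact hpos R ⟨hR.1, hlt⟩

/-- Under Assumptions 3.6 and 3.10(1) of the paper — (i) for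
each `r ∈ [0,d_e)` there is `R_int(r) ∈ (0,R_e)` such that `G(·,r)` is
strictly increasing on `(0,R_int(r))` and strictly decreasing on
`(R_int(r),R_e)`, and (ii) whenever `G(R̃,r̃) = 0` with `R̃ > 0` and
`r̃ < r < d_e`, then `G(R̃,r) < 0` — if `0 ≤ r₁ < r₂ < d_e` and
`R₁, R₂ ∈ (0,R_e)` satisfy `G(R₁,r₁) = 0` and `G(R₂,r₂) = 0`, then `R₂ < R₁`:
the longer the major axis of a stationary ellipse state, the shorter its
minor axis. -/
theorem ellipse_minor_axis_decreases
    (f : ℝ → ℝ) (hf : ContinuousOn f (Set.Ici 0))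
    (de : ℝ) (hde : 0 < de) (Re : ℝ) (hRe : 0 < Re)
    (hshape : ∀ r ∈ Set.Ico (0:ℝ) de, ∃ Rint ∈ Set.Ioo (0:ℝ) Re,
        StrictMonoOn (fun R => Gfun f R r) (Set.Ioo 0 Rint)
          ∧ StrictAntiOn (fun R => Gfun f R r) (Set.Ioo Rint Re))
    (hmono : ∀ Rt rt r : ℝ, 0 < Rt → Gfun f Rt rt = 0 → rt < r → r < de →
        Gfun f Rt r < 0)
    (r₁ r₂ : ℝ) (hr₁ : 0 ≤ r₁) (hr₁₂ : r₁ < r₂) (hr₂ : r₂ < de)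
    (R₁ R₂ : ℝ) (hR₁ : R₁ ∈ Set.Ioo (0:ℝ) Re) (hR₂ : R₂ ∈ Set.Ioo (0:ℝ) Re)
    (hG₁ : Gfun f R₁ r₁ = 0) (hG₂ : Gfun f R₂ r₂ = 0) :
    R₂ < R₁ := by
  obtain ⟨Rint, hRint, hinc, hdec⟩ := hshape r₂ ⟨le_trans hr₁ (le_of_lt hr₁₂), hr₂⟩
  have hposIoc := Gfun_pos_on_Ioc f hf r₂ Rint hRint.1 hinc
  -- G(R₁, r₂) < 0
  have hneg : Gfun f R₁ r₂ < 0 := hmono R₁ r₁ r₂ hR₁.1 hG₁ hr₁₂ hr₂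
  -- hence R₁ ∉ Ioc 0 Rint, so Rint < R₁
  have hR₁gt : Rint < R₁ := by
    by_contra h
    push_neg at h
    exact absurd (hposIoc R₁ ⟨hR₁.1, h⟩) (by linarith)
  -- similarly R₂ ∉ Ioc 0 Rint (since G(R₂,r₂) = 0, not positive), so Rint < R₂
  have hR₂gt : Rint < R₂ := by
    by_contra h
    push_neg at h
    exact absurd (hposIoc R₂ ⟨hR₂.1, h⟩) (by rw [hG₂]; exact lt_irrefl 0)
  -- on (Rint, Re) the function is strictly decreasing; conclude
  by_contra h
  push_neg at h
  rcases eq_or_lt_of_le h with hEq | hlt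
  · rw [hEq] at hneg
    linarith
  · have := hdec ⟨hR₁gt, hR₁.2⟩ ⟨hR₂gt, hR₂.2⟩ hlt
    simp only at this
    linarith
end

section
/- Let χ ∈ [0,1], T = diag(1,χ), θ ∈ ℝ, R_θ ∈ SO(2) the rotation by angle θ, and T̃ = R_θ T R_θᵀ. Let f_A, f_R : [0,∞) → ℝ be continuous with at most linear growth of ρ ↦ (|f_A(ρ)| + |f_R(ρ)|) ρ, define F(d, M) = f_A(|d|) M d + f_R(|d|) d, and let ρ be a Borel probability measure on ℝ² with finite first moment such that ∫ F(x − y, T) dρ(y) = 0 for every x in the support of ρ (i.e. ρ is an equilibrium state for the tensor field T). Fix x_c ∈ ℝ², let Φ(x) = x_c + R_θ (x − x_c), and let ρ̃ = Φ_# ρ be the pushforward measure. Then ∫ F(x − y, T̃) dρ̃(y) = 0 for every x in the support of ρ̃; i.e. ρ̃ is an equilibrium state of the mean-field equation for the tensor field T̃. -/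
open Real MeasureTheory

/-- Rotation of the plane by angle `θ`. -/
noncomputable def rot (θ : ℝ) (v : ℝ × ℝ) : ℝ × ℝ :=
  (Real.cos θ * v.1 - Real.sin θ * v.2, Real.sin θ * v.1 + Real.cos θ * v.2)

/-- The total force `F(d,M) = f_A(|d|) M d + f_R(|d|) d` of the anisotropic
interaction model, for a tensor field given as a map `M : ℝ² → ℝ²`. -/
noncomputable def tensForce (fA fR : ℝ → ℝ) (M : ℝ × ℝ → ℝ × ℝ) (d : ℝ × ℝ) : ℝ × ℝ :=
  fA (Real.sqrt (d.1 ^ 2 + d.2 ^ 2)) • M d + fR (Real.sqrt (d.1 ^ 2 + d.2 ^ 2)) • d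

/-- The (topological) support of a Borel measure on the plane: the set of
points all of whose open neighbourhoods have positive measure. -/
def msupport (μ : Measure (ℝ × ℝ)) : Set (ℝ × ℝ) :=
  {x | ∀ U : Set (ℝ × ℝ), IsOpen U → x ∈ U → 0 < μ U}

/-- `rot θ` as a continuous linear map. -/
noncomputable def rotL (θ : ℝ) : (ℝ × ℝ) →L[ℝ] (ℝ × ℝ) :=
  { toFun := rot θ
    map_add' := by intro v w; simp [rot, Prod.ext_iff]; constructor <;> ring
    map_smul' := by intro c v; simp [rot, Prod.ext_iff, Prod.smul_def, smul_eq_mul]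
                    constructor <;> ring
    cont := by
      unfold rot
      fun_prop }

lemma rot_neg_rot (θ : ℝ) (v : ℝ × ℝ) : rot (-θ) (rot θ v) = v := by
  have h := sin_sq_add_cos_sq θ
  rw [Prod.ext_iff]
  simp only [rot, Real.cos_neg, Real.sin_neg]
  constructor
  · linear_combination v.1 * h
  · linear_combination v.2 * h

lemma rot_rot_neg (θ : ℝ) (v : ℝ × ℝ) : rot θ (rot (-θ) v) = v := by
  have := rot_neg_rot (-θ) v
  simpa using this

lemma rot_sq_sum (θ : ℝ) (d : ℝ × ℝ) :
    (rot θ d).1 ^ 2 + (rot θ d).2 ^ 2 = d.1 ^ 2 + d.2 ^ 2 := by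
  have h := sin_sq_add_cos_sq θ
  simp only [rot]
  nlinarith [h]

lemma rot_continuous (θ : ℝ) : Continuous (rot θ) := (rotL θ).continuous

lemma rot_sub (θ : ℝ) (a b : ℝ × ℝ) : rot θ (a - b) = rot θ a - rot θ b :=
  map_sub (rotL θ) a b

lemma rot_smul_add (θ : ℝ) (c d : ℝ) (a b : ℝ × ℝ) :
    c • rot θ a + d • rot θ b = rot θ (c • a + d • b) := by
  show c • (rotL θ) a + d • (rotL θ) b = (rotL θ) (c • a + d • b)
  rw [map_add, _root_.map_smul, _root_.map_smul]

/-- If the probability measure `ρ` (with finite first moment)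
is an equilibrium state of the mean-field equation for the tensor field
`T = diag(1,χ)`, then its pushforward under the rotation
`Φ(x) = x_c + R_θ(x − x_c)` is an equilibrium state for the rotated tensor
field `T̃ = R_θ T R_θᵀ`. -/
theorem rotated_equilibrium_state
    (χ : ℝ) (hχ : χ ∈ Set.Icc (0:ℝ) 1) (θ : ℝ)
    (fA fR : ℝ → ℝ)
    (hfA : ContinuousOn fA (Set.Ici 0)) (hfR : ContinuousOn fR (Set.Ici 0))
    (C : ℝ) (hgrowth : ∀ ρ ∈ Set.Ici (0:ℝ), (|fA ρ| + |fR ρ|) * ρ ≤ C * (1 + ρ))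
    (ρm : Measure (ℝ × ℝ)) [IsProbabilityMeasure ρm]
    (hmom : Integrable (fun x : ℝ × ℝ => ‖x‖) ρm)
    (heq : ∀ x ∈ msupport ρm,
      ∫ y, tensForce fA fR (fun v => (v.1, χ * v.2)) (x - y) ∂ρm = 0)
    (xc : ℝ × ℝ) :
    ∀ x ∈ msupport (Measure.map (fun z => xc + rot θ (z - xc)) ρm),
      ∫ y, tensForce fA fR
          (fun v => rot θ ((fun w => (w.1, χ * w.2)) (rot (-θ) v))) (x - y)
        ∂(Measure.map (fun z => xc + rot θ (z - xc)) ρm) = 0 := by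
  intro x hx
  set Φ : (ℝ × ℝ) → (ℝ × ℝ) := fun z => xc + rot θ (z - xc) with hΦdef
  set Ψ : (ℝ × ℝ) → (ℝ × ℝ) := fun w => xc + rot (-θ) (w - xc) with hΨdef
  have hΦcont : Continuous Φ := by
    apply continuous_const.add ((rot_continuous θ).comp (continuous_id.sub continuous_const))
  have hΨcont : Continuous Ψ := by
    apply continuous_const.add ((rot_continuous (-θ)).comp (continuous_id.sub continuous_const))
  have hΨΦ : ∀ z, Ψ (Φ z) = z := by
    intro z
    simp only [hΦdef, hΨdef, add_sub_cancel_left, rot_neg_rot]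
    abel
  -- the preimage point is in the support of ρm
  have hx0 : Ψ x ∈ msupport ρm := by
    intro U hU hxU
    have hV : IsOpen (Ψ ⁻¹' U) := hU.preimage hΨcont
    have hxV : x ∈ Ψ ⁻¹' U := hxU
    have hpos := hx (Ψ ⁻¹' U) hV hxV
    rw [Measure.map_apply hΦcont.measurable hV.measurableSet] at hpos
    have hset : Φ ⁻¹' (Ψ ⁻¹' U) = U := by
      ext z
      simp [Set.mem_preimage, hΨΦ z]
    rwa [hset] at hpos
  -- key pointwise identity
  set T : (ℝ × ℝ) → (ℝ × ℝ) := fun v => (v.1, χ * v.2) with hTdef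
  set Tt : (ℝ × ℝ) → (ℝ × ℝ) := fun v => rot θ (T (rot (-θ) v)) with hTtdef
  have hdiff : ∀ z, x - Φ z = rot θ (Ψ x - z) := by
    intro z
    have h1 : Ψ x - z = (rot (-θ) (x - xc)) - (z - xc) := by simp [hΨdef]; abel
    rw [h1, rot_sub, rot_rot_neg]
    simp [hΦdef]
    abel
  have hkey : ∀ z, tensForce fA fR Tt (x - Φ z) = rot θ (tensForce fA fR T (Ψ x - z)) := by
    intro z
    rw [hdiff z]
    simp only [tensForce, hTtdef, rot_neg_rot, rot_sq_sum]
    exact rot_smul_add θ _ _ _ _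
  -- measurability of the integrand
  have hnormcont : Continuous (fun d : ℝ × ℝ => Real.sqrt (d.1 ^ 2 + d.2 ^ 2)) := by fun_prop
  have hfAc : Continuous (fun d : ℝ × ℝ => fA (Real.sqrt (d.1 ^ 2 + d.2 ^ 2))) :=
    hfA.comp_continuous hnormcont (fun d => Real.sqrt_nonneg _)
  have hfRc : Continuous (fun d : ℝ × ℝ => fR (Real.sqrt (d.1 ^ 2 + d.2 ^ 2))) :=
    hfR.comp_continuous hnormcont (fun d => Real.sqrt_nonneg _)
  have hTcont : Continuous T := by unfold T; fun_prop
  have hTtcont : Continuous Tt :=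
    (rot_continuous θ).comp (hTcont.comp (rot_continuous (-θ)))
  have hgcont : Continuous (fun y => tensForce fA fR Tt (x - y)) := by
    unfold tensForce
    apply Continuous.add
    · exact Continuous.smul (hfAc.comp (continuous_const.sub continuous_id))
        (hTtcont.comp (continuous_const.sub continuous_id))
    · exact Continuous.smul (hfRc.comp (continuous_const.sub continuous_id))
        (continuous_const.sub continuous_id)
  rw [integral_map hΦcont.measurable.aemeasurable hgcont.aestronglyMeasurable]
  have hfe : (fun z => tensForce fA fR Tt (x - Φ z))
      = fun z => rotL θ (tensForce fA fR T (Ψ x - z)) := by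
    funext z; exact hkey z
  rw [hfe]
  by_cases hI : Integrable (fun z => tensForce fA fR T (Ψ x - z)) ρm
  · rw [ContinuousLinearMap.integral_comp_comm (rotL θ) hI, heq (Ψ x) hx0, map_zero]
  · have hI2 : ¬ Integrable (fun z => rotL θ (tensForce fA fR T (Ψ x - z))) ρm := by
      intro hcon
      apply hI
      have h3 : (fun z => tensForce fA fR T (Ψ x - z))
          = fun z => rotL (-θ) (rotL θ (tensForce fA fR T (Ψ x - z))) := by
        funext z
        show _ = rot (-θ) (rot θ _)
        rw [rot_neg_rot]
      rw [h3]
      exact (rotL (-θ)).integrable_comp hcon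
    rw [integral_undef hI2]
end

section
/- Let χ ∈ [0,1] and let f_A, f_R : [0,∞) → ℝ be continuous with |f_A(ρ)| + |f_R(ρ)| ≤ C e^{−cρ} for some constants C, c > 0. Define F(d) = ((f_A + f_R)(|d|) d₁, (χ f_A + f_R)(|d|) d₂) for d = (d₁,d₂) ∈ ℝ² and let Δ > 0. Then for every x₁ ∈ [−Δ/2, Δ/2] the second component of ∫_{[−Δ/2,Δ/2]×ℝ} F((x₁,0) − x') dx' vanishes, and the condition '∫_{[−Δ/2,Δ/2]×ℝ} F((x₁,0) − x') dx' = 0 for all x₁ ∈ [−Δ/2,Δ/2]' holds if and only if the first component satisfies ∫_{[x₁, Δ−x₁]×ℝ} F₁(x') dx' = 0 for all x₁ ∈ [0, Δ/2). -/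
open Real MeasureTheory

/-!
Exponential decay of the coefficients makes `F` integrable on the whole plane, and after a
translation the equilibrium integral at `(x₁, 0)` is the integral of `F` over the stripe
`[x₁ - Δ/2, x₁ + Δ/2] × ℝ`. Its second component vanishes since `F₂` is odd in `d₂`. Its first
component is odd in `x₁` since `F` is odd, and for `x₁ ≥ 0` the part of the stripe over
`[x₁ - Δ/2, Δ/2 - x₁]` is symmetric about the origin and contributes nothing, which leaves the
stripe over `[y, Δ - y]` with `y = Δ/2 - x₁`.
-/

open Set

lemma integrable_exp_neg_mul_abs {a : ℝ} (ha : 0 < a) :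
    Integrable fun x : ℝ => exp (-a * |x|) := by
  rw [← integrableOn_univ, ← Iic_union_Ioi (a := (0 : ℝ)), integrableOn_union]
  constructor
  · refine (integrableOn_exp_mul_Iic ha 0).congr_fun (fun x hx => ?_) measurableSet_Iic
    rw [abs_of_nonpos hx, neg_mul_neg]
  · refine (integrableOn_exp_mul_Ioi (neg_neg_of_pos ha) 0).congr_fun (fun x hx => ?_)
      measurableSet_Ioi
    rw [abs_of_pos hx]

lemma abs_mul_le_of_abs_le_mul_exp {ψ : ℝ → ℝ} {K c ρ t : ℝ} (hc : 0 < c)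
    (hψ : |ψ ρ| ≤ K * exp (-c * ρ)) (ht : |t| ≤ ρ) :
    |ψ ρ * t| ≤ 2 * K / c * exp (-(c / 2) * ρ) := by
  have hK : 0 ≤ K * exp (-c * ρ) := (abs_nonneg _).trans hψ
  have hexp : exp (-c * ρ) = exp (-(c / 2 * ρ)) * exp (-(c / 2) * ρ) := by
    rw [← exp_add]; ring_nf
  -- `y e^{-y} ≤ e^{-1} ≤ 1` at `y = cρ/2` trades the factor `ρ` for half of the decay rate
  have hpoly : c / 2 * ρ * exp (-(c / 2 * ρ)) ≤ 1 :=
    (mul_exp_neg_le_exp_neg_one _).trans (exp_le_one_iff.2 (by norm_num))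
  calc |ψ ρ * t| = |ψ ρ| * |t| := abs_mul _ _
    _ ≤ K * exp (-c * ρ) * ρ := mul_le_mul hψ ht (abs_nonneg _) hK
    _ = 2 * K / c * (c / 2 * ρ * exp (-(c / 2 * ρ))) * exp (-(c / 2) * ρ) := by
      rw [hexp]; field_simp
    _ ≤ 2 * K / c * exp (-(c / 2) * ρ) := by
      have hK' : 0 ≤ K := nonneg_of_mul_nonneg_left hK (exp_pos _)
      gcongr
      exact mul_le_of_le_one_right (by positivity) hpoly

lemma abs_fst_le_sqrt (d : ℝ × ℝ) : |d.1| ≤ √(d.1 ^ 2 + d.2 ^ 2) :=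
  abs_le_sqrt (le_add_of_nonneg_right (sq_nonneg _))

lemma abs_snd_le_sqrt (d : ℝ × ℝ) : |d.2| ≤ √(d.1 ^ 2 + d.2 ^ 2) :=
  abs_le_sqrt (le_add_of_nonneg_left (sq_nonneg _))

lemma abs_fst_add_abs_snd_le (d : ℝ × ℝ) : |d.1| + |d.2| ≤ 2 * √(d.1 ^ 2 + d.2 ^ 2) := by
  linarith [abs_fst_le_sqrt d, abs_snd_le_sqrt d]

lemma integrable_radial_mul {ψ : ℝ → ℝ} {g : ℝ × ℝ → ℝ} {K c : ℝ}
    (hψ : ContinuousOn ψ (Ici 0)) (hc : 0 < c)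
    (hdecay : ∀ ρ ∈ Ici (0 : ℝ), |ψ ρ| ≤ K * exp (-c * ρ))
    (hg : Continuous g) (hg_le : ∀ d : ℝ × ℝ, |g d| ≤ √(d.1 ^ 2 + d.2 ^ 2)) :
    Integrable fun d : ℝ × ℝ => ψ √(d.1 ^ 2 + d.2 ^ 2) * g d := by
  have hK : 0 ≤ K := by simpa using (abs_nonneg _).trans (hdecay 0 self_mem_Ici)
  have hdom : Integrable fun d : ℝ × ℝ =>
      2 * K / c * (exp (-(c / 4) * |d.1|) * exp (-(c / 4) * |d.2|)) :=
    ((integrable_exp_neg_mul_abs (by positivity)).mul_prod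
      (integrable_exp_neg_mul_abs (by positivity))).const_mul _
  have hcont : Continuous fun d : ℝ × ℝ => ψ √(d.1 ^ 2 + d.2 ^ 2) * g d :=
    (hψ.comp_continuous (by fun_prop) fun _ => sqrt_nonneg _).mul hg
  refine hdom.mono' hcont.aestronglyMeasurable (ae_of_all _ fun d => ?_)
  have hsplit : exp (-(c / 2) * √(d.1 ^ 2 + d.2 ^ 2))
      ≤ exp (-(c / 4) * |d.1|) * exp (-(c / 4) * |d.2|) := by
    rw [← exp_add, exp_le_exp]
    nlinarith [abs_fst_add_abs_snd_le d]
  rw [norm_eq_abs]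
  exact (abs_mul_le_of_abs_le_mul_exp hc (hdecay _ (sqrt_nonneg _)) (hg_le d)).trans
    (by gcongr)

section

variable {fA fR : ℝ → ℝ} {χ : ℝ}

lemma integrable_anisoForce {C c : ℝ} (hfA : ContinuousOn fA (Ici 0))
    (hfR : ContinuousOn fR (Ici 0)) (hc : 0 < c)
    (hdecay : ∀ ρ ∈ Ici (0 : ℝ), |fA ρ| + |fR ρ| ≤ C * exp (-c * ρ)) :
    Integrable (anisoForce fA fR χ) := by
  refine Integrable.prodMk
    (integrable_radial_mul (ψ := fun ρ => fA ρ + fR ρ) (K := C) (hfA.add hfR) hc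
      (fun ρ hρ => ?_) continuous_fst abs_fst_le_sqrt)
    (integrable_radial_mul (ψ := fun ρ => χ * fA ρ + fR ρ) (K := (|χ| + 1) * C)
      ((continuousOn_const.mul hfA).add hfR) hc (fun ρ hρ => ?_)
      continuous_snd abs_snd_le_sqrt)
  · exact (abs_add_le _ _).trans (hdecay ρ hρ)
  · calc |χ * fA ρ + fR ρ| ≤ |χ| * |fA ρ| + |fR ρ| := by
          rw [← abs_mul]; exact abs_add_le _ _
      _ ≤ (|χ| + 1) * (|fA ρ| + |fR ρ|) := by
          nlinarith [abs_nonneg χ, abs_nonneg (fA ρ), abs_nonneg (fR ρ)]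
      _ ≤ (|χ| + 1) * C * exp (-c * ρ) := by
          rw [mul_assoc]; exact mul_le_mul_of_nonneg_left (hdecay ρ hρ) (by positivity)

lemma anisoForce_neg (d : ℝ × ℝ) : anisoForce fA fR χ (-d) = -anisoForce fA fR χ d := by
  simp only [anisoForce, Prod.fst_neg, Prod.snd_neg, neg_sq, mul_neg, Prod.neg_mk]

lemma anisoForce_snd_reflect (d : ℝ × ℝ) :
    (anisoForce fA fR χ (d.1, -d.2)).2 = -(anisoForce fA fR χ d).2 := by
  simp only [anisoForce, neg_sq, mul_neg]

lemma setIntegral_prod_univ_anisoForce_snd (s : Set ℝ) :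
    ∫ u in s ×ˢ univ, (anisoForce fA fR χ u).2 = 0 := by
  have hreflect : MeasurePreserving (fun u : ℝ × ℝ => (u.1, -u.2)) :=
    (MeasurePreserving.id volume).prod (Measure.measurePreserving_neg volume)
  have key := hreflect.setIntegral_preimage_emb
    ((MeasurableEquiv.refl ℝ).prodCongr (MeasurableEquiv.neg ℝ)).measurableEmbedding
    (fun u => (anisoForce fA fR χ u).2) (s ×ˢ univ)
  have hpre : (fun u : ℝ × ℝ => (u.1, -u.2)) ⁻¹' (s ×ˢ univ) = s ×ˢ univ := by ext; simp
  rw [hpre] at key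
  simp only [anisoForce_snd_reflect, integral_neg] at key
  linarith

noncomputable def stripeForceFst (fA fR : ℝ → ℝ) (χ a b : ℝ) : ℝ :=
  ∫ u in Icc a b ×ˢ (univ : Set ℝ), (anisoForce fA fR χ u).1

lemma stripeForceFst_neg (a b : ℝ) :
    stripeForceFst fA fR χ (-b) (-a) = -stripeForceFst fA fR χ a b := by
  have hpre : Neg.neg ⁻¹' (Icc (-b) (-a) ×ˢ (univ : Set ℝ)) = Icc a b ×ˢ univ := by
    ext; simp [and_comm]
  have key := (Measure.measurePreserving_neg (volume : Measure (ℝ × ℝ))).setIntegral_preimage_emb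
    (MeasurableEquiv.neg (ℝ × ℝ)).measurableEmbedding (fun u => (anisoForce fA fR χ u).1)
    (Icc (-b) (-a) ×ˢ univ)
  rw [hpre] at key
  simp only [anisoForce_neg, Prod.fst_neg, integral_neg] at key
  rw [stripeForceFst, stripeForceFst, ← key]

lemma stripeForceFst_neg_self (a : ℝ) : stripeForceFst fA fR χ (-a) a = 0 := by
  have := stripeForceFst_neg (fA := fA) (fR := fR) (χ := χ) (-a) a
  rw [neg_neg] at this
  linarith

lemma volume_Icc_self_prod_univ (a : ℝ) : volume (Icc a a ×ˢ (univ : Set ℝ)) = 0 := by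
  rw [Measure.volume_eq_prod, Measure.prod_prod, Real.volume_Icc, sub_self, ENNReal.ofReal_zero,
    zero_mul]

lemma stripeForceFst_add (hF : Integrable (anisoForce fA fR χ)) {a b d : ℝ} (hab : a ≤ b)
    (hbd : b ≤ d) :
    stripeForceFst fA fR χ a d = stripeForceFst fA fR χ a b + stripeForceFst fA fR χ b d := by
  have hinter : Icc a b ×ˢ (univ : Set ℝ) ∩ Icc b d ×ˢ univ = Icc b b ×ˢ univ := by
    rw [prod_inter_prod, Icc_inter_Icc, max_eq_right hab, min_eq_left hbd, inter_univ]
  have hdisj : AEDisjoint volume (Icc a b ×ˢ (univ : Set ℝ)) (Icc b d ×ˢ univ) := by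
    rw [AEDisjoint, hinter]; exact volume_Icc_self_prod_univ b
  rw [stripeForceFst, stripeForceFst, stripeForceFst, ← setIntegral_union₀ hdisj
    (measurableSet_Icc.prod MeasurableSet.univ).nullMeasurableSet hF.fst.integrableOn
    hF.fst.integrableOn, ← union_prod, Icc_union_Icc_eq_Icc hab hbd]

lemma stripeForceFst_centered (hF : Integrable (anisoForce fA fR χ)) {x h : ℝ} (hx : 0 ≤ x)
    (hxh : x ≤ h) :
    stripeForceFst fA fR χ (x - h) (x + h) = stripeForceFst fA fR χ (h - x) (x + h) := by
  rw [stripeForceFst_add hF (b := h - x) (by linarith) (by linarith), ← neg_sub h x,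
    stripeForceFst_neg_self, zero_add]

lemma setIntegral_prod_univ_anisoForce (hF : Integrable (anisoForce fA fR χ)) (a b : ℝ) :
    ∫ u in Icc a b ×ˢ univ, anisoForce fA fR χ u = (stripeForceFst fA fR χ a b, 0) := by
  rw [← setIntegral_prod_univ_anisoForce_snd (fA := fA) (fR := fR) (χ := χ) (Icc a b)]
  exact integral_pair hF.fst.integrableOn hF.snd.integrableOn

lemma setIntegral_stripe_comp_const_sub {E : Type*} [NormedAddCommGroup E] [NormedSpace ℝ E]
    (f : ℝ × ℝ → E) (x h : ℝ) :
    ∫ u in Icc (-h) h ×ˢ univ, f ((x, 0) - u) = ∫ u in Icc (x - h) (x + h) ×ˢ univ, f u := by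
  have hpre : (fun u : ℝ × ℝ => ((x, 0) : ℝ × ℝ) - u) ⁻¹' (Icc (x - h) (x + h) ×ˢ univ)
      = Icc (-h) h ×ˢ univ := by
    ext u
    simp only [mem_preimage, mem_prod, mem_Icc, mem_univ, and_true, Prod.fst_sub]
    constructor <;> intro hu <;> constructor <;> linarith [hu.1, hu.2]
  rw [← hpre]
  exact (Measure.measurePreserving_sub_left volume _).setIntegral_preimage_emb
    (MeasurableEquiv.subLeft _).measurableEmbedding _ _

lemma forall_mem_Icc_neg_iff_of_odd {M : Type*} [SubtractionMonoid M] {g : ℝ → M}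
    (hg : ∀ x, g (-x) = -g x) (a : ℝ) :
    (∀ x ∈ Icc (-a) a, g x = 0) ↔ ∀ x ∈ Icc 0 a, g x = 0 := by
  refine ⟨fun H x hx => H x ⟨by linarith [hx.1, hx.2], hx.2⟩, fun H x hx => ?_⟩
  rcases le_total 0 x with hx0 | hx0
  · exact H x ⟨hx0, hx.2⟩
  · rw [← neg_neg x, hg, H (-x) ⟨by linarith, by linarith [hx.1]⟩, neg_zero]

end

theorem stripe_equilibrium_reduction_general
    (χ : ℝ)
    (fA fR : ℝ → ℝ)
    (hfA : ContinuousOn fA (Set.Ici 0)) (hfR : ContinuousOn fR (Set.Ici 0))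
    (C c : ℝ) (hc : 0 < c)
    (hdecay : ∀ ρ ∈ Set.Ici (0:ℝ), |fA ρ| + |fR ρ| ≤ C * Real.exp (-c * ρ))
    (Δ : ℝ) :
    (∀ x₁ ∈ Set.Icc (-(Δ / 2)) (Δ / 2),
        (∫ x' in Set.Icc (-(Δ / 2)) (Δ / 2) ×ˢ (Set.univ : Set ℝ),
          anisoForce fA fR χ (((x₁, 0) : ℝ × ℝ) - x')).2 = 0)
      ∧ ((∀ x₁ ∈ Set.Icc (-(Δ / 2)) (Δ / 2),
            ∫ x' in Set.Icc (-(Δ / 2)) (Δ / 2) ×ˢ (Set.univ : Set ℝ),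
              anisoForce fA fR χ (((x₁, 0) : ℝ × ℝ) - x') = 0)
          ↔ ∀ x₁ ∈ Set.Ico (0:ℝ) (Δ / 2),
              ∫ x' in Set.Icc x₁ (Δ - x₁) ×ˢ (Set.univ : Set ℝ),
                (anisoForce fA fR χ x').1 = 0) := by
  have hF : Integrable (anisoForce fA fR χ) := integrable_anisoForce hfA hfR hc hdecay
  have hforce (x : ℝ) : ∫ x' in Icc (-(Δ / 2)) (Δ / 2) ×ˢ univ,
      anisoForce fA fR χ ((x, 0) - x') = (stripeForceFst fA fR χ (x - Δ / 2) (x + Δ / 2), 0) := by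
    rw [setIntegral_stripe_comp_const_sub, setIntegral_prod_univ_anisoForce hF]
  have hodd (x : ℝ) : stripeForceFst fA fR χ (-x - Δ / 2) (-x + Δ / 2)
      = -stripeForceFst fA fR χ (x - Δ / 2) (x + Δ / 2) := by
    rw [← stripeForceFst_neg]; congr 1 <;> ring
  refine ⟨fun x _ => by rw [hforce], ?_⟩
  simp only [hforce, Prod.mk_eq_zero, and_true]
  rw [forall_mem_Icc_neg_iff_of_odd (g := fun x => stripeForceFst fA fR χ (x - Δ / 2) (x + Δ / 2))
    hodd]
  constructor
  · intro H y ⟨hy0, hyΔ⟩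
    have := H (Δ / 2 - y) ⟨by linarith, by linarith⟩
    rwa [stripeForceFst_centered hF (by linarith) (by linarith), sub_sub_cancel,
      show Δ / 2 - y + Δ / 2 = Δ - y by ring] at this
  · rintro H x ⟨hx0, hxΔ⟩
    rcases hx0.eq_or_lt with rfl | hx0
    · rw [zero_sub, zero_add, stripeForceFst_neg_self]
    · rw [stripeForceFst_centered hF hx0.le hxΔ, show x + Δ / 2 = Δ - (Δ / 2 - x) by ring]
      exact H _ ⟨by linarith, by linarith⟩

/-- For the anisotropic force with exponentially decaying
continuous coefficients and a vertical stripe of width `Δ > 0`: for every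
`x₁ ∈ [−Δ/2, Δ/2]` the second component of the stripe force integral at
`(x₁,0)` vanishes, and the full vector equilibrium condition on the stripe
holds if and only if the first component satisfies
`∫_{[x₁,Δ−x₁]×ℝ} F₁(x') dx' = 0` for all `x₁ ∈ [0, Δ/2)`. -/
theorem stripe_equilibrium_reduction
    (χ : ℝ) (hχ : χ ∈ Set.Icc (0:ℝ) 1)
    (fA fR : ℝ → ℝ)
    (hfA : ContinuousOn fA (Set.Ici 0)) (hfR : ContinuousOn fR (Set.Ici 0))
    (C c : ℝ) (hC : 0 < C) (hc : 0 < c)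
    (hdecay : ∀ ρ ∈ Set.Ici (0:ℝ), |fA ρ| + |fR ρ| ≤ C * Real.exp (-c * ρ))
    (Δ : ℝ) (hΔ : 0 < Δ) :
    (∀ x₁ ∈ Set.Icc (-(Δ / 2)) (Δ / 2),
        (∫ x' in Set.Icc (-(Δ / 2)) (Δ / 2) ×ˢ (Set.univ : Set ℝ),
          anisoForce fA fR χ (((x₁, 0) : ℝ × ℝ) - x')).2 = 0)
      ∧ ((∀ x₁ ∈ Set.Icc (-(Δ / 2)) (Δ / 2),
            ∫ x' in Set.Icc (-(Δ / 2)) (Δ / 2) ×ˢ (Set.univ : Set ℝ),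
              anisoForce fA fR χ (((x₁, 0) : ℝ × ℝ) - x') = 0)
          ↔ ∀ x₁ ∈ Set.Ico (0:ℝ) (Δ / 2),
              ∫ x' in Set.Icc x₁ (Δ - x₁) ×ˢ (Set.univ : Set ℝ),
                (anisoForce fA fR χ x').1 = 0) :=
  stripe_equilibrium_reduction_general χ fA fR hfA hfR C c hc hdecay Δ
end
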